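/- arXiv:2308.12239 — 8 statements merged into one kernel-verified Lean document; each statement's English description precedes it below -/
import Mathlib

section
/- If M is a matroid in which every circuit has size at least r(M) (i.e., M is a paving matroid), and C1, C2 are distinct circuits of size r(M) with a common element x such that |C1 ∪ C2| = r(M) + 1, then (C1 ∪ C2) - x is a circuit of M. -/
open Set

variable {α : Type*}

/-- The rank of a set `X` in a matroid: size of a largest independent subset of `X`. -/
noncomputable def Matroid.rkSet (M : Matroid α) (X : Set α) : ℕ :=
  sSup {n | ∃ I, M.Indep I ∧ I ⊆ X ∧ I.ncard = n}

/-- The rank of a matroid. -/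
noncomputable def Matroid.rank (M : Matroid α) : ℕ := M.rkSet M.E

/-- A circuit is a minimal dependent set. -/
def Matroid.IsCircuit' (M : Matroid α) (C : Set α) : Prop :=
  M.Dep C ∧ ∀ D, D ⊂ C → M.Indep D

/-- A paving matroid: every circuit has size at least the rank. -/
def Matroid.Paving (M : Matroid α) : Prop :=
  ∀ C, M.IsCircuit' C → M.rank ≤ C.ncard

/-- Deletion of a set from a matroid. -/
noncomputable def Matroid.del (M : Matroid α) (D : Set α) : Matroid α :=
  M.restrict (M.E \ D)

/-- A cyclic ordering of a matroid, given as a list: every `M.rank`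
cyclically-consecutive entries form a base. -/
def Matroid.IsCyclicOrdering (M : Matroid α) (l : List α) : Prop :=
  l.Nodup ∧ {x | x ∈ l} = M.E ∧
    ∀ i : ℕ, M.IsBase {x | x ∈ (l.rotate i).take M.rank}

/-! In a paving matroid circuits have size at least `r(M)`, while circuit elimination puts a
circuit inside `(C1 ∪ C2) \ {x}`, a set of size exactly `r(M)`; so that circuit is the whole set. -/

namespace Matroid

variable {M : Matroid α} {C D : Set α}

lemma isCircuit'_iff_isCircuit : M.IsCircuit' C ↔ M.IsCircuit C :=
  isCircuit_iff_forall_ssubset.symm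

lemma Paving.eq_of_isCircuit_subset (hM : M.Paving) (hC : M.IsCircuit C) (hCD : C ⊆ D)
    (hDfin : D.Finite) (hD : D.ncard ≤ M.rank) : C = D :=
  eq_of_subset_of_ncard_le hCD
    (hD.trans (hM C (isCircuit'_iff_isCircuit.2 hC))) hDfin

end Matroid

theorem stmt1_general (M : Matroid α) (hpav : M.Paving) (C1 C2 : Set α) (x : α)
    (h1 : M.IsCircuit' C1) (h2 : M.IsCircuit' C2) (hne : C1 ≠ C2)
    (hx : x ∈ C1 ∩ C2) (hu : (C1 ∪ C2).ncard = M.rank + 1) :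
    M.IsCircuit' ((C1 ∪ C2) \ {x}) := by
  rw [Matroid.isCircuit'_iff_isCircuit] at h1 h2 ⊢
  obtain ⟨C, hCD, hC⟩ := h1.elimination h2 hne x
  have hfin : (C1 ∪ C2).Finite := finite_of_ncard_ne_zero (by omega)
  have hcard : ((C1 ∪ C2) \ {x}).ncard = M.rank := by
    rw [ncard_sdiff_singleton_of_mem (mem_union_left C2 hx.1), hu, Nat.add_sub_cancel]
  rwa [← hpav.eq_of_isCircuit_subset hC hCD hfin.sdiff hcard.le]

/-- Circuit elimination in a paving matroid applied to two rank-size circuits whose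
union has size `r(M) + 1`. -/
theorem stmt1 (M : Matroid α) (hpav : M.Paving) (C1 C2 : Set α) (x : α)
    (h1 : M.IsCircuit' C1) (h2 : M.IsCircuit' C2) (hne : C1 ≠ C2)
    (hc1 : C1.ncard = M.rank) (hc2 : C2.ncard = M.rank)
    (hx : x ∈ C1 ∩ C2) (hu : (C1 ∪ C2).ncard = M.rank + 1) :
    M.IsCircuit' ((C1 ∪ C2) \ {x}) :=
  stmt1_general M hpav C1 C2 x h1 h2 hne hx hu
end

section
/- Let M be a paving matroid with r(M) ≥ 3 and |E(M)| ≥ 2·r(M) + 2, and suppose that for every nonempty X ⊆ E(M), |X|/r(X) ≤ |E(M)|/r(M). Then there exists a basis B of M such that r(M\B) = r(M) and for every nonempty X ⊆ E(M) - B, |X|/r(X) ≤ |E(M) - B|/r(M). -/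
open Set

variable {α : Type*}

/-!
Let `r = r(M)`, `n = |E(M)|` and `q = ⌊(r - 1)(n - r) / r⌋`, and call a base `B` good if
`|F - B| ≤ q` for every hyperplane `F`. In a paving matroid every set with at least `r - 1`
elements has rank `r - 1` or `r`, and a subset of `E - B` of rank `r - 1` lies in the hyperplane
it spans; so for a good base `B` the density bound on `E - B` and `r(E - B) = r` are immediate.

Good bases exist. The density hypothesis gives `|F| ≤ q + r - 1` for every hyperplane `F`, and
two distinct hyperplanes of a paving matroid share at most `r - 2` elements; as `n ≤ 2q + 2`,
for any base `B` at most one hyperplane `F` has `|F - B| > q`, and every other one has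
`|F' - B| ≤ q - 1`. Since `(F ∩ B) + x` has fewer than `r` elements for `x ∈ F - B`, it is
independent and extends to a base inside `B + x`; this exchange lowers `|F - B|` by one and
raises every other `|F' - B|` by at most one, so repeating it produces a good base.
-/

namespace Matroid

variable {M : Matroid α} {B B' F F' G I X : Set α} {q : ℕ}

def IsHyperplane (M : Matroid α) (F : Set α) : Prop :=
  M.IsFlat F ∧ M.rkSet F = M.rank - 1

theorem IsHyperplane.subset_ground (hF : M.IsHyperplane F) : F ⊆ M.E :=
  hF.1.subset_ground

theorem rkSet_restrict (R : Set α) (hX : X ⊆ R) : (M.restrict R).rkSet X = M.rkSet X := by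
  unfold rkSet
  congr! 3 with n
  refine exists_congr fun I ↦ ?_
  rw [restrict_indep_iff]
  exact ⟨fun ⟨⟨hI, _⟩, hIX, hn⟩ ↦ ⟨hI, hIX, hn⟩,
    fun ⟨hI, hIX, hn⟩ ↦ ⟨⟨hI, hIX.trans hX⟩, hIX, hn⟩⟩

theorem rank_del (D : Set α) : (M.del D).rank = M.rkSet (M.E \ D) :=
  rkSet_restrict _ Subset.rfl

section RankFinite

variable [M.RankFinite]

theorem IsBasis.rkSet_eq_ncard (hI : M.IsBasis I X) : M.rkSet X = I.ncard := by
  refine IsGreatest.csSup_eq ⟨⟨I, hI.indep, hI.subset, rfl⟩, ?_⟩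
  rintro _ ⟨J, hJ, hJX, rfl⟩
  obtain ⟨J', hJ', hJJ'⟩ := hJ.subset_isBasis_of_subset hJX hI.subset_ground
  calc J.ncard ≤ J'.ncard := ncard_le_ncard hJJ' hJ'.indep.finite
    _ = I.ncard := by rw [ncard_def, ncard_def, hJ'.encard_eq_encard hI]

theorem Indep.rkSet_eq_ncard (hI : M.Indep I) : M.rkSet I = I.ncard :=
  hI.isBasis_self.rkSet_eq_ncard

theorem IsBase.ncard_eq_rank (hB : M.IsBase B) : B.ncard = M.rank :=
  (isBasis_ground_iff.mpr hB).rkSet_eq_ncard.symm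

theorem Indep.ncard_le_rkSet (hI : M.Indep I) (hIX : I ⊆ X) (hX : X ⊆ M.E) :
    I.ncard ≤ M.rkSet X := by
  obtain ⟨J, hJ, hIJ⟩ := hI.subset_isBasis_of_subset hIX hX
  exact hJ.rkSet_eq_ncard ▸ ncard_le_ncard hIJ hJ.indep.finite

theorem rkSet_le_rank (hX : X ⊆ M.E) : M.rkSet X ≤ M.rank := by
  obtain ⟨I, hI⟩ := M.exists_isBasis X hX
  exact hI.rkSet_eq_ncard ▸ hI.indep.ncard_le_rkSet hI.indep.subset_ground Subset.rfl

theorem rkSet_closure (hX : X ⊆ M.E) : M.rkSet (M.closure X) = M.rkSet X := by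
  obtain ⟨I, hI⟩ := M.exists_isBasis X hX
  rw [hI.rkSet_eq_ncard, hI.isBasis_closure_right.rkSet_eq_ncard]

theorem Indep.isBasis_of_rkSet_le_ncard (hI : M.Indep I) (hIX : I ⊆ X) (hX : X ⊆ M.E)
    (h : M.rkSet X ≤ I.ncard) : M.IsBasis I X := by
  refine (isBasis_iff hX).mpr ⟨hI, hIX, fun J hJ hIJ hJX ↦ ?_⟩
  exact eq_of_subset_of_ncard_le hIJ ((hJ.ncard_le_rkSet hJX hX).trans h) hJ.finite

theorem IsBase.ncard_sdiff_le_ncard_sdiff_add_one {x : α} (hB : M.IsBase B) (hB' : M.IsBase B')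
    (hB'B : B' ⊆ insert x B) (hG : G.Finite) : (G \ B').ncard ≤ (G \ B).ncard + 1 := by
  have hBB' : (B \ B').ncard ≤ 1 := by
    rw [hB.ncard_sdiff_comm hB', ← ncard_singleton x]
    exact ncard_le_ncard (fun y ⟨hyB', hyB⟩ ↦ (hB'B hyB').resolve_right hyB)
  have hsub : G \ B' ⊆ (G \ B) ∪ (B \ B') := fun y ⟨hyG, hyB'⟩ ↦ by
    by_cases hyB : y ∈ B
    · exact Or.inr ⟨hyB, hyB'⟩
    · exact Or.inl ⟨hyG, hyB⟩
  calc (G \ B').ncard ≤ ((G \ B) ∪ (B \ B')).ncard :=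
        ncard_le_ncard hsub (hG.sdiff.union hB.finite.sdiff)
    _ ≤ (G \ B).ncard + 1 := (ncard_union_le _ _).trans (by omega)

theorem isHyperplane_closure (hX : X ⊆ M.E) (h : M.rkSet X = M.rank - 1) :
    M.IsHyperplane (M.closure X) :=
  ⟨M.isFlat_closure X, by rw [rkSet_closure hX, h]⟩

theorem IsHyperplane.nonempty (hF : M.IsHyperplane F) (hr : 1 < M.rank) : F.Nonempty := by
  rw [nonempty_iff_ne_empty]
  rintro rfl
  have := hF.2
  rw [M.empty_indep.rkSet_eq_ncard, ncard_empty] at this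
  omega

end RankFinite

section Finite

variable [M.Finite]

theorem Paving.indep_of_ncard_lt (hpav : M.Paving) (hX : X ⊆ M.E) (h : X.ncard < M.rank) :
    M.Indep X := by
  by_contra hdep
  obtain ⟨C, hCX, hC⟩ := ((M.not_indep_iff hX).mp hdep).exists_isCircuit_subset
  have hCr := hpav C ⟨hC.dep, fun _ ↦ hC.ssubset_indep⟩
  have hCX := ncard_le_ncard hCX (M.ground_finite.subset hX)
  omega

theorem Paving.exists_indep_subset_ncard_eq (hpav : M.Paving) (hX : X ⊆ M.E)
    (h : M.rank ≤ X.ncard + 1) : ∃ S ⊆ X, M.Indep S ∧ S.ncard = M.rank - 1 := by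
  obtain ⟨S, hSX, hS⟩ := exists_subset_card_eq (s := X) (n := M.rank - 1) (by omega)
  refine ⟨S, hSX, ?_, hS⟩
  obtain rfl | hne := S.eq_empty_or_nonempty
  · exact M.empty_indep
  have := (ncard_pos (M.ground_finite.subset (hSX.trans hX))).mpr hne
  exact hpav.indep_of_ncard_lt (hSX.trans hX) (by omega)

theorem Paving.rank_sub_one_le_rkSet (hpav : M.Paving) (hX : X ⊆ M.E)
    (h : M.rank ≤ X.ncard + 1) : M.rank - 1 ≤ M.rkSet X := by
  obtain ⟨S, hSX, hS, hSr⟩ := hpav.exists_indep_subset_ncard_eq hX h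
  exact hSr ▸ hS.ncard_le_rkSet hSX hX

theorem Paving.eq_of_isHyperplane_of_rank_le_ncard_inter_add_one (hpav : M.Paving)
    (hF : M.IsHyperplane F) (hF' : M.IsHyperplane F') (h : M.rank ≤ (F ∩ F').ncard + 1) :
    F = F' := by
  obtain ⟨S, hSFF', hS, hSr⟩ :=
    hpav.exists_indep_subset_ncard_eq (inter_subset_left.trans hF.subset_ground) h
  have hcl : ∀ G, M.IsHyperplane G → S ⊆ G → M.closure S = G := fun G hG hSG ↦
    (hS.isBasis_of_rkSet_le_ncard hSG hG.subset_ground (by rw [hG.2, hSr])).closure_eq_closure.trans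
      hG.1.closure
  rw [← hcl F hF (hSFF'.trans inter_subset_left), hcl F' hF' (hSFF'.trans inter_subset_right)]

theorem Paving.ncard_sdiff_add_ncard_sdiff_add_two_le (hpav : M.Paving) (hB : M.IsBase B)
    (hF : M.IsHyperplane F) (hF' : M.IsHyperplane F') (hne : F ≠ F') :
    (F \ B).ncard + (F' \ B).ncard + 2 ≤ M.E.ncard := by
  have hfin := M.ground_finite
  have hFF' : (F ∩ F').ncard + 2 ≤ M.rank := by
    by_contra! h
    exact hne (hpav.eq_of_isHyperplane_of_rank_le_ncard_inter_add_one hF hF' (by omega))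
  have hinter : ((F \ B) ∩ (F' \ B)).ncard ≤ (F ∩ F').ncard :=
    ncard_le_ncard (inter_subset_inter sdiff_subset sdiff_subset)
      (hfin.subset (inter_subset_left.trans hF.subset_ground))
  have hunion : ((F \ B) ∪ (F' \ B)).ncard ≤ (M.E \ B).ncard :=
    ncard_le_ncard (union_subset (sdiff_subset_sdiff_left hF.subset_ground)
      (sdiff_subset_sdiff_left hF'.subset_ground)) hfin.sdiff
  have hEB : (M.E \ B).ncard + M.rank = M.E.ncard := by
    rw [← hB.ncard_eq_rank, ncard_sdiff_add_ncard_of_subset hB.subset_ground hfin]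
  have := ncard_inter_add_ncard_union (F \ B) (F' \ B)
    (hfin.subset (sdiff_subset.trans hF.subset_ground))
    (hfin.subset (sdiff_subset.trans hF'.subset_ground))
  omega

theorem Paving.exists_isBase_ncard_sdiff_lt (hpav : M.Paving) (hB : M.IsBase B)
    (hF : F ⊆ M.E) (hFB : (F \ B).Nonempty) (hr : (F ∩ B).ncard + 2 ≤ M.rank) :
    ∃ B', M.IsBase B' ∧ (F \ B').ncard < (F \ B).ncard ∧
      ∀ G ⊆ M.E, (G \ B').ncard ≤ (G \ B).ncard + 1 := by
  obtain ⟨x, hxF, hxB⟩ := hFB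
  have hJ : M.Indep (insert x (F ∩ B)) :=
    hpav.indep_of_ncard_lt (insert_subset (hF hxF) (inter_subset_left.trans hF))
      ((ncard_insert_le x _).trans_lt (by omega))
  obtain ⟨B', hB', hJB', hB'J⟩ := hJ.exists_isBase_subset_union_isBase hB
  have hB'B : B' ⊆ insert x B := hB'J.trans
    (union_subset (insert_subset_insert inter_subset_right) (subset_insert x B))
  have hFB' : F \ B' ⊆ F \ B := fun y ⟨hyF, hyB'⟩ ↦
    ⟨hyF, fun hyB ↦ hyB' (hJB' (mem_insert_of_mem x ⟨hyF, hyB⟩))⟩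
  have hfin := M.ground_finite
  refine ⟨B', hB', ncard_lt_ncard ?_ (hfin.subset (sdiff_subset.trans hF)), fun G hG ↦
    hB.ncard_sdiff_le_ncard_sdiff_add_one hB' hB'B (hfin.subset hG)⟩
  exact hFB'.ssubset_of_mem_notMem ⟨hxF, hxB⟩ fun hx ↦ hx.2 (hJB' (mem_insert x _))

theorem Paving.exists_isBase_forall_ncard_sdiff_le (hpav : M.Paving)
    (hFq : ∀ F, M.IsHyperplane F → F.ncard ≤ q + (M.rank - 1))
    (hn : M.E.ncard ≤ 2 * q + 2) :
    ∃ B, M.IsBase B ∧ ∀ F, M.IsHyperplane F → (F \ B).ncard ≤ q := by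
  have hfin := M.ground_finite
  suffices h : ∀ k B, M.IsBase B → (∀ F, M.IsHyperplane F → (F \ B).ncard ≤ q + k) →
      ∃ B, M.IsBase B ∧ ∀ F, M.IsHyperplane F → (F \ B).ncard ≤ q by
    obtain ⟨B, hB⟩ := M.exists_isBase
    exact h _ B hB fun F hF ↦
      (ncard_le_ncard (sdiff_subset.trans hF.subset_ground) hfin).trans (Nat.le_add_left _ _)
  intro k
  induction k with
  | zero => exact fun B hB h ↦ ⟨B, hB, h⟩
  | succ k ih =>
    intro B hB hBk
    by_cases hgood : ∀ F, M.IsHyperplane F → (F \ B).ncard ≤ q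
    · exact ⟨B, hB, hgood⟩
    push Not at hgood
    obtain ⟨F, hF, hFB⟩ := hgood
    have hsplit := ncard_inter_add_ncard_sdiff_eq_ncard F B (hfin.subset hF.subset_ground)
    have hFcard := hFq F hF
    obtain ⟨B', hB', hlt, hexch⟩ := hpav.exists_isBase_ncard_sdiff_lt hB hF.subset_ground
      (nonempty_of_ncard_ne_zero (by omega)) (by omega)
    refine ih B' hB' fun G hG ↦ ?_
    obtain rfl | hne := eq_or_ne G F
    · have := hBk G hG
      omega
    · have := hpav.ncard_sdiff_add_ncard_sdiff_add_two_le hB hF hG hne.symm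
      have := hexch G hG.subset_ground
      omega

theorem ncard_le_of_rkSet_eq_rank_sub_one (hgood : ∀ F, M.IsHyperplane F → (F \ B).ncard ≤ q)
    (hX : X ⊆ M.E \ B) (h : M.rkSet X = M.rank - 1) : X.ncard ≤ q := by
  have hXE : X ⊆ M.E := hX.trans sdiff_subset
  calc X.ncard ≤ (M.closure X \ B).ncard :=
        ncard_le_ncard (fun x hx ↦ ⟨M.subset_closure X hXE hx, (hX hx).2⟩)
          (M.ground_finite.subset (sdiff_subset.trans (M.closure_subset_ground X)))
    _ ≤ q := hgood _ (isHyperplane_closure hXE h)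

theorem Paving.rkSet_ground_sdiff_eq_rank (hpav : M.Paving)
    (hgood : ∀ F, M.IsHyperplane F → (F \ B).ncard ≤ q) (hq : q < (M.E \ B).ncard)
    (hr : M.rank ≤ (M.E \ B).ncard + 1) : M.rkSet (M.E \ B) = M.rank := by
  have h1 := hpav.rank_sub_one_le_rkSet sdiff_subset hr
  have h2 := rkSet_le_rank (M := M) (X := M.E \ B) sdiff_subset
  by_contra hne
  have := ncard_le_of_rkSet_eq_rank_sub_one hgood Subset.rfl (by omega)
  omega

theorem Paving.ncard_mul_rank_le (hpav : M.Paving)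
    (hgood : ∀ F, M.IsHyperplane F → (F \ B).ncard ≤ q)
    (hq : q * M.rank ≤ (M.E \ B).ncard * (M.rank - 1)) (hr : M.rank ≤ (M.E \ B).ncard)
    (hX : X ⊆ M.E \ B) : X.ncard * M.rank ≤ (M.E \ B).ncard * M.rkSet X := by
  have hXE : X ⊆ M.E := hX.trans sdiff_subset
  by_cases hXi : M.Indep X
  · rw [hXi.rkSet_eq_ncard, Nat.mul_comm]
    exact Nat.mul_le_mul_right _ hr
  have hXr : M.rank ≤ X.ncard := not_lt.mp fun h ↦ hXi (hpav.indep_of_ncard_lt hXE h)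
  have h1 := hpav.rank_sub_one_le_rkSet hXE (by omega)
  have h2 := rkSet_le_rank (M := M) hXE
  obtain h | h : M.rkSet X = M.rank ∨ M.rkSet X = M.rank - 1 := by omega
  · rw [h]
    exact Nat.mul_le_mul_right _ (ncard_le_ncard hX M.ground_finite.sdiff)
  · rw [h]
    exact (Nat.mul_le_mul_right _ (ncard_le_of_rkSet_eq_rank_sub_one hgood hX h)).trans hq

end Finite

end Matroid

namespace Nat

variable {r m : ℕ}

theorem le_div_add_sub_one_of_mul_le {f : ℕ} (hr : 0 < r) (h : f * r ≤ (m + r) * (r - 1)) :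
    f ≤ (r - 1) * m / r + (r - 1) := by
  rw [← Nat.add_mul_div_right _ _ hr, Nat.le_div_iff_mul_le hr]
  linarith [show (r - 1) * m + (r - 1) * r = (m + r) * (r - 1) by ring]

theorem add_le_two_mul_div_add_two (hr : 3 ≤ r) (hm : r + 2 ≤ m) :
    m + r ≤ 2 * ((r - 1) * m / r) + 2 := by
  obtain ⟨a, rfl⟩ : ∃ a, r = a + 3 := ⟨r - 3, by omega⟩
  obtain ⟨c, rfl⟩ : ∃ c, m = a + 5 + c := ⟨m - (a + 5), by omega⟩
  rw [show a + 3 - 1 = a + 2 by omega]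
  have hdm := Nat.div_add_mod ((a + 2) * (a + 5 + c)) (a + 3)
  have hmod := Nat.mod_lt ((a + 2) * (a + 5 + c)) (show 0 < a + 3 by omega)
  by_contra! hcon
  have := Nat.mul_le_mul_left (a + 3)
    (show 2 * ((a + 2) * (a + 5 + c) / (a + 3)) ≤ 2 * a + 5 + c by omega)
  nlinarith

theorem sub_one_mul_div_lt (hr : 0 < r) (hm : 0 < m) : (r - 1) * m / r < m :=
  Nat.div_lt_of_lt_mul (Nat.mul_lt_mul_of_pos_right (by omega) hm)

end Nat

/-- Proposition 1: a paving matroid with `|E| ≥ 2r + 2`, `r ≥ 3` and `γ(M) = β(E(M))`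
has a basis `B` with `r(M\B) = r(M)` and `γ(M\B) = β(E(M) - B)`. -/
theorem stmt3 (M : Matroid α) [M.Finite] (hpav : M.Paving) (hr : 3 ≤ M.rank)
    (hE : 2 * M.rank + 2 ≤ M.E.ncard)
    (hγ : ∀ X ⊆ M.E, X.Nonempty → X.ncard * M.rank ≤ M.E.ncard * M.rkSet X) :
    ∃ B, M.IsBase B ∧ (M.del B).rank = M.rank ∧
      ∀ X ⊆ M.E \ B, X.Nonempty →
        X.ncard * M.rank ≤ (M.E \ B).ncard * M.rkSet X := by
  obtain ⟨m, hn⟩ : ∃ m, M.E.ncard = m + M.rank := ⟨M.E.ncard - M.rank, by omega⟩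
  have hFq (F : Set α) (hF : M.IsHyperplane F) :
      F.ncard ≤ (M.rank - 1) * m / M.rank + (M.rank - 1) := by
    have hdensity := hγ F hF.subset_ground (hF.nonempty (by omega))
    rw [hF.2, hn] at hdensity
    exact Nat.le_div_add_sub_one_of_mul_le (by omega) hdensity
  obtain ⟨B, hB, hgood⟩ := hpav.exists_isBase_forall_ncard_sdiff_le hFq
    (hn ▸ Nat.add_le_two_mul_div_add_two hr (by omega))
  have hEB : (M.E \ B).ncard = m := by
    rw [ncard_sdiff hB.subset_ground hB.finite, hB.ncard_eq_rank]
    omega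
  refine ⟨B, hB, ?_, fun X hX _ ↦ ?_⟩
  · rw [Matroid.rank_del, hpav.rkSet_ground_sdiff_eq_rank hgood
      (hEB ▸ Nat.sub_one_mul_div_lt (by omega) (by omega)) (by omega)]
  · refine hpav.ncard_mul_rank_le hgood ?_ (by omega) hX
    rw [hEB, Nat.mul_comm m]
    exact Nat.div_mul_le_self _ _
end

section
/- Let S1 ⊆ 2^S be a family on a finite set S satisfying properties (S1) and (S2) of an S-pair. If A ∈ S1, x ∈ A, j ≤ |A| - 1, and every j-element subset of A - x belongs to S1, then every j-element subset of A belongs to S1. -/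
variable {α : Type*} [DecidableEq α]

/-- Property (S1) of an `S`-pair, for one family. -/
def PropS1 (𝒮 : Set (Finset α)) : Prop :=
  ∀ A ∈ 𝒮, ∀ B ∈ 𝒮, A.card = B.card + 1 → B ⊂ A →
    ∀ C ⊆ A, C.card = B.card → C ∈ 𝒮

/-- Property (S2) of an `S`-pair, for one family. -/
def PropS2 (𝒮 : Set (Finset α)) : Prop :=
  ∀ A ∈ 𝒮, ∀ B ∈ 𝒮, A.card = B.card → (A ∩ B).card = A.card - 1 → A ∪ B ∈ 𝒮

/-- `(𝒮₁, 𝒮₂)` is an `S`-pair: both families consist of subsets of `S` and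
satisfy (S1)–(S4). -/
def IsSPair (S : Finset α) (𝒮₁ 𝒮₂ : Set (Finset α)) : Prop :=
  (∀ A ∈ 𝒮₁, A ⊆ S) ∧ (∀ A ∈ 𝒮₂, A ⊆ S) ∧
  PropS1 𝒮₁ ∧ PropS1 𝒮₂ ∧ PropS2 𝒮₁ ∧ PropS2 𝒮₂ ∧
  (¬ ∀ x ∈ S, {x} ∈ 𝒮₁) ∧ (¬ ∀ x ∈ S, {x} ∈ 𝒮₂) ∧ S ∉ 𝒮₁ ∧ S ∉ 𝒮₂ ∧
  (∀ k, 1 ≤ k → k ≤ S.card - 1 → ∀ x ∈ S,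
    ¬ ((∀ C ⊆ S.erase x, C.card = k → C ∈ 𝒮₁) ∧
       (∀ C ⊆ S.erase x, C.card = S.card - k → C ∈ 𝒮₂)))

/-- `(𝒮₁, 𝒮₂)` is order consistent with respect to `S`: for every ordering
`s₁ s₂ ⋯ sₙ` of `S` there is `i` with `{s₁, …, sᵢ} ∈ 𝒮₁` or `{sᵢ, …, sₙ} ∈ 𝒮₂`. -/
def OrderConsistent (S : Finset α) (𝒮₁ 𝒮₂ : Set (Finset α)) : Prop :=
  ∀ e : Fin S.card → α, Function.Injective e → Finset.univ.image e = S →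
    ∃ i : Fin S.card,
      (Finset.Iic i).image e ∈ 𝒮₁ ∨ (Finset.Ici i).image e ∈ 𝒮₂

/-- The witness configuration in Theorem 4.1: `(A₁, A₂) ∈ 𝒮₁ × 𝒮₂` of size `n-1`,
`A₁ ≠ A₂`, and `B₁, B₂ ⊆ S` of size `n-2` with `Bᵢ ∩ Aᵢ = B₁ ∩ B₂` an `(n-3)`-subset
of `A₁ ∩ A₂` and every singleton of `Bᵢ` in `𝒮ᵢ`. -/
def SPairWitness (S : Finset α) (𝒮₁ 𝒮₂ : Set (Finset α)) : Prop :=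
  ∃ A₁ ∈ 𝒮₁, ∃ A₂ ∈ 𝒮₂, ∃ B₁ B₂ : Finset α,
    A₁.card = S.card - 1 ∧ A₂.card = S.card - 1 ∧ A₁ ≠ A₂ ∧
    B₁ ⊆ S ∧ B₂ ⊆ S ∧ B₁.card = S.card - 2 ∧ B₂.card = S.card - 2 ∧
    B₁ ∩ A₁ = B₁ ∩ B₂ ∧ B₂ ∩ A₂ = B₁ ∩ B₂ ∧
    B₁ ∩ B₂ ⊆ A₁ ∩ A₂ ∧ (B₁ ∩ B₂).card = S.card - 3 ∧
    (∀ x ∈ B₁, {x} ∈ 𝒮₁) ∧ (∀ x ∈ B₂, {x} ∈ 𝒮₂)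

/-- Observation 3: if `A ∈ 𝒮₁`, `x ∈ A`, and every `j`-subset of `A - x` is in `𝒮₁`,
then every `j`-subset of `A` is in `𝒮₁`. -/
theorem stmt6 (S : Finset α) (𝒮 : Set (Finset α)) (hsub : ∀ A ∈ 𝒮, A ⊆ S)
    (h1 : PropS1 𝒮) (h2 : PropS2 𝒮)
    (A : Finset α) (hA : A ∈ 𝒮) (x : α) (hx : x ∈ A)
    (j : ℕ) (hj : j ≤ A.card - 1)
    (hall : ∀ C ⊆ A.erase x, C.card = j → C ∈ 𝒮) :
    ∀ C ⊆ A, C.card = j → C ∈ 𝒮 := by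
  intro C hCA hCcard
  rcases Nat.eq_zero_or_pos j with hj0 | hjpos
  · -- j = 0 : C = ∅ is a subset of A.erase x
    exact hall C (by simp [Finset.card_eq_zero.mp (hCcard.trans hj0)]) hCcard
  -- j ≥ 1 henceforth
  -- Step 1: all k-subsets of A.erase x with j ≤ k ≤ A.card - 1 are in 𝒮
  have up : ∀ k, j ≤ k → k ≤ A.card - 1 → ∀ E ⊆ A.erase x, E.card = k → E ∈ 𝒮 := by
    intro k hjk
    induction k, hjk using Nat.le_induction with
    | base => intro _; exact hall
    | succ k hk IH =>
      intro hk1 E hE hEcard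
      have hk2 : 2 ≤ E.card := by omega
      obtain ⟨a, ha, b, hb, hab⟩ := Finset.one_lt_card.mp hk2
      have hFa : E.erase a ∈ 𝒮 := by
        refine IH (by omega) _ ((Finset.erase_subset _ _).trans hE) ?_
        rw [Finset.card_erase_of_mem ha, hEcard]; omega
      have hFb : E.erase b ∈ 𝒮 := by
        refine IH (by omega) _ ((Finset.erase_subset _ _).trans hE) ?_
        rw [Finset.card_erase_of_mem hb, hEcard]; omega
      have hunion : E.erase a ∪ E.erase b = E := by
        apply Finset.Subset.antisymm
        · exact Finset.union_subset (Finset.erase_subset _ _) (Finset.erase_subset _ _)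
        · intro z hz
          rcases eq_or_ne z a with rfl | hza
          · exact Finset.mem_union_right _ (Finset.mem_erase.mpr ⟨hab, hz⟩)
          · exact Finset.mem_union_left _ (Finset.mem_erase.mpr ⟨hza, hz⟩)
      have hinter : (E.erase a ∩ E.erase b).card = (E.erase a).card - 1 := by
        have : E.erase a ∩ E.erase b = (E.erase a).erase b := by
          ext z
          simp only [Finset.mem_inter, Finset.mem_erase]
          tauto
        rw [this, Finset.card_erase_of_mem (by simp [Finset.mem_erase, Ne.symm hab, hb])]
      have := h2 _ hFa _ hFb (by
        rw [Finset.card_erase_of_mem ha, Finset.card_erase_of_mem hb]) hinter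
      rwa [hunion] at this
  -- Step 2: A.erase x ∈ 𝒮, hence all (A.card - 1)-subsets of A are in 𝒮
  have hex : A.erase x ∈ 𝒮 :=
    up (A.card - 1) hj le_rfl _ Finset.Subset.rfl (Finset.card_erase_of_mem hx)
  have hxA : 1 ≤ A.card := Finset.card_pos.mpr ⟨x, hx⟩
  have htop : ∀ C ⊆ A, C.card = A.card - 1 → C ∈ 𝒮 := by
    intro C hC hCc
    exact h1 A hA _ hex (by rw [Finset.card_erase_of_mem hx]; omega)
      (Finset.erase_ssubset hx) C hC (by rw [Finset.card_erase_of_mem hx, hCc])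
  -- Step 3: downward induction on d : all (A.card - 1 - d)-subsets of A with
  -- card ≥ j are in 𝒮
  have down : ∀ d, ∀ C ⊆ A, C.card = A.card - 1 - d → j ≤ A.card - 1 - d → C ∈ 𝒮 := by
    intro d
    induction d with
    | zero => intro C hC hCc _; exact htop C hC (by omega)
    | succ d IH =>
      intro C hC hCc hjk
      by_cases hxC : x ∈ C
      · -- pick y ∈ A \ C
        have hlt : C.card < A.card := by omega
        obtain ⟨y, hyA, hyC⟩ := Finset.exists_of_ssubset (hC.ssubset_of_ne (by intro h; subst h; omega))
        have hA' : insert y C ⊆ A := Finset.insert_subset hyA hC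
        have hA'card : (insert y C).card = C.card + 1 := Finset.card_insert_of_notMem hyC
        have hA'mem : insert y C ∈ 𝒮 := IH _ hA' (by omega) (by omega)
        have hxA' : x ∈ insert y C := Finset.mem_insert_of_mem hxC
        have hB' : (insert y C).erase x ∈ 𝒮 := by
          refine up C.card (by omega) (by omega) _ ?_ ?_
          · intro z hz
            rw [Finset.mem_erase] at hz ⊢
            exact ⟨hz.1, hA' hz.2⟩
          · rw [Finset.card_erase_of_mem hxA', hA'card]; omega
        exact h1 _ hA'mem _ hB'
          (by rw [Finset.card_erase_of_mem hxA', hA'card]; omega)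
          (Finset.erase_ssubset hxA') C (Finset.subset_insert _ _)
          (by rw [Finset.card_erase_of_mem hxA', hA'card]; omega)
      · exact up C.card (by omega) (by omega) C
          (fun z hz => Finset.mem_erase.mpr ⟨fun h => hxC (h ▸ hz), hC hz⟩) rfl
  exact down (A.card - 1 - j) C hCA (by omega) (by omega)
end

section
/- Let S1 ⊆ 2^S satisfy properties (S1) and (S2) of an S-pair. Let A ⊆ S, x ∈ A, and j ≥ 2. If every j-element subset of A containing x belongs to S1, then every j-element subset of A belongs to S1, and moreover A ∈ S1. -/
variable {α : Type*} [DecidableEq α]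

private lemma erase_inter_erase' (s : Finset α) (y z : α) :
    s.erase y ∩ s.erase z = (s.erase y).erase z := by
  ext a; simp only [Finset.mem_inter, Finset.mem_erase]; tauto

set_option maxHeartbeats 1000000 in
/-- Observation 4: if every `j`-subset of `A` containing `x` is in `𝒮₁`, then every
`j`-subset of `A` is in `𝒮₁`, and `A ∈ 𝒮₁`. -/
theorem stmt7 (S : Finset α) (𝒮 : Set (Finset α)) (hsub : ∀ A ∈ 𝒮, A ⊆ S)
    (h1 : PropS1 𝒮) (h2 : PropS2 𝒮)
    (A : Finset α) (hA : A ⊆ S) (x : α) (hx : x ∈ A)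
    (j : ℕ) (hj : 2 ≤ j) (hjA : j ≤ A.card)
    (hall : ∀ C ⊆ A, x ∈ C → C.card = j → C ∈ 𝒮) :
    (∀ C ⊆ A, C.card = j → C ∈ 𝒮) ∧ A ∈ 𝒮 := by
  have step1 : ∀ C ⊆ A, C.card = j → C ∈ 𝒮 := by
    intro C hCA hC
    by_cases hxC : x ∈ C
    · exact hall C hCA hxC hC
    -- pick two distinct elements of C
    have hCpos : 0 < C.card := by omega
    obtain ⟨y, hy⟩ := Finset.card_pos.mp hCpos
    have hCy : (C.erase y).card = j - 1 := by rw [Finset.card_erase_of_mem hy, hC]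
    have : 0 < (C.erase y).card := by omega
    obtain ⟨z, hz⟩ := Finset.card_pos.mp this
    have hzy : z ≠ y := (Finset.mem_erase.mp hz).1
    have hzC : z ∈ C := (Finset.mem_erase.mp hz).2
    set D := insert x (C.erase y) with hD
    set E := insert x (C.erase z) with hE
    have hxny : x ∉ C.erase y := fun h => hxC (Finset.mem_erase.mp h).2
    have hxnz : x ∉ C.erase z := fun h => hxC (Finset.mem_erase.mp h).2
    have hDA : D ⊆ A := Finset.insert_subset hx ((Finset.erase_subset _ _).trans hCA)
    have hEA : E ⊆ A := Finset.insert_subset hx ((Finset.erase_subset _ _).trans hCA)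
    have hDcard : D.card = j := by
      rw [hD, Finset.card_insert_of_notMem hxny, hCy]; omega
    have hEcard : E.card = j := by
      rw [hE, Finset.card_insert_of_notMem hxnz, Finset.card_erase_of_mem hzC, hC]; omega
    have hDS : D ∈ 𝒮 := hall D hDA (Finset.mem_insert_self _ _) hDcard
    have hES : E ∈ 𝒮 := hall E hEA (Finset.mem_insert_self _ _) hEcard
    have hinter : D ∩ E = insert x ((C.erase y).erase z) := by
      rw [hD, hE]
      ext a
      simp only [Finset.mem_inter, Finset.mem_insert, Finset.mem_erase]
      tauto
    have hintercard : (D ∩ E).card = j - 1 := by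
      rw [hinter, Finset.card_insert_of_notMem (fun h => hxny (Finset.erase_subset _ _ h)),
        Finset.card_erase_of_mem hz, hCy]
      omega
    have hunion : D ∪ E = insert x C := by
      rw [hD, hE, ← Finset.insert_union_distrib]
      congr 1
      ext a
      simp only [Finset.mem_union, Finset.mem_erase]
      constructor
      · rintro (⟨-, h⟩ | ⟨-, h⟩) <;> exact h
      · intro ha
        by_cases hay : a = y
        · exact Or.inr ⟨hay ▸ hzy.symm, ha⟩
        · exact Or.inl ⟨hay, ha⟩
    have hUS : D ∪ E ∈ 𝒮 := h2 D hDS E hES (by rw [hDcard, hEcard])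
      (by rw [hintercard, hDcard])
    have hUcard : (D ∪ E).card = j + 1 := by
      rw [hunion, Finset.card_insert_of_notMem hxC, hC]
    exact h1 (D ∪ E) hUS D hDS (by omega)
      ⟨Finset.subset_union_left, fun h => by
        have := Finset.card_le_card h; omega⟩
      C (by rw [hunion]; exact Finset.subset_insert _ _) (by omega)
  refine ⟨step1, ?_⟩
  -- upward induction
  have up : ∀ k, j ≤ k → k ≤ A.card → ∀ K ⊆ A, K.card = k → K ∈ 𝒮 := by
    intro k hk
    induction k with
    | zero => omega
    | succ n ih =>
      intro hkA K hKA hK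
      rcases Nat.lt_or_ge j (n+1) with hlt | hge
      · -- n ≥ j, use ih
        have hn : j ≤ n := by omega
        have hKpos : 0 < K.card := by omega
        obtain ⟨y, hy⟩ := Finset.card_pos.mp hKpos
        have hKy : (K.erase y).card = n := by rw [Finset.card_erase_of_mem hy, hK]; omega
        have : 0 < (K.erase y).card := by omega
        obtain ⟨z, hz⟩ := Finset.card_pos.mp this
        have hzy : z ≠ y := (Finset.mem_erase.mp hz).1
        have hzK : z ∈ K := (Finset.mem_erase.mp hz).2
        have hD : K.erase y ∈ 𝒮 := ih hn (by omega) _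
          ((Finset.erase_subset _ _).trans hKA) hKy
        have hE : K.erase z ∈ 𝒮 := ih hn (by omega) _
          ((Finset.erase_subset _ _).trans hKA)
          (by rw [Finset.card_erase_of_mem hzK, hK]; omega)
        have hunion : K.erase y ∪ K.erase z = K := by
          ext a
          simp only [Finset.mem_union, Finset.mem_erase]
          constructor
          · rintro (⟨-, h⟩ | ⟨-, h⟩) <;> exact h
          · intro ha
            by_cases hay : a = y
            · exact Or.inr ⟨hay ▸ hzy.symm, ha⟩
            · exact Or.inl ⟨hay, ha⟩
        have hicard : (K.erase y ∩ K.erase z).card = n - 1 := by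
          rw [erase_inter_erase', Finset.card_erase_of_mem hz, hKy]
        have := h2 _ hD _ hE
          (by rw [hKy, Finset.card_erase_of_mem hzK, hK]; omega)
          (by rw [hicard, hKy])
        rwa [hunion] at this
      · -- n + 1 = j
        have : n + 1 = j := by omega
        exact step1 K hKA (by rw [hK, this])
  exact up A.card hjA le_rfl A subset_rfl rfl
end

section
/- Let (S1, S2) be an S-pair on a finite set S with |S| = n ≥ 3. If there exist sets A1 ∈ S1 and A2 ∈ S2 with |A1| = |A2| = n-1, A1 ≠ A2, and sets B1, B2 ⊆ S with |B1| = |B2| = n-2, such that for i = 1,2: Bi ∩ Ai = B1 ∩ B2, B1 ∩ B2 is an (n-3)-subset of A1 ∩ A2, and every singleton subset of Bi lies in Si, then (S1, S2) is order consistent: for every ordering s1 s2 ... sn of S, there exists i ∈ [n] with {s1,...,si} ∈ S1 or {si,...,sn} ∈ S2. -/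
variable {α : Type*} [DecidableEq α]

/-!
Write `A₁ = S - a₁`, `A₂ = S - a₂` and let `c` be the one point outside `B₁ ∪ B₂`. The
conditions `Bᵢ ∩ Aᵢ = B₁ ∩ B₂` force `S - B₁ ⊆ {a₂, c}` and `S - B₂ ⊆ {a₁, c}`. Given an
ordering `s₁ ⋯ sₙ`, if `s₁ ∈ B₁` or `sₙ ∈ B₂` a singleton does the job. Otherwise
`sₙ ∈ {a₁, c}`: if `sₙ = a₁` the prefix `{s₁, …, sₙ₋₁}` is `A₁ ∈ 𝒮₁`; if `sₙ = c`, then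
`s₁ ≠ c` forces `s₁ = a₂` and the suffix `{s₂, …, sₙ}` is `A₂ ∈ 𝒮₂`.
-/

namespace Fin

variable {n : ℕ}

theorem Iic_eq_singleton_of_val_eq_zero {i : Fin n} (hi : (i : ℕ) = 0) :
    Finset.Iic i = {i} := by
  ext j
  simp only [Finset.mem_Iic, Finset.mem_singleton, Fin.le_def, Fin.ext_iff]
  omega

theorem Ici_eq_singleton_of_val_add_one_eq {i : Fin n} (hi : (i : ℕ) + 1 = n) :
    Finset.Ici i = {i} := by
  ext j
  simp only [Finset.mem_Ici, Finset.mem_singleton, Fin.le_def, Fin.ext_iff]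
  omega

theorem Iic_eq_univ_erase {i j : Fin n} (hij : (i : ℕ) + 1 = j) (hj : (j : ℕ) + 1 = n) :
    Finset.Iic i = Finset.univ.erase j := by
  ext k
  simp only [Finset.mem_Iic, Finset.mem_erase, Finset.mem_univ, and_true, ne_eq,
    Fin.le_def, Fin.ext_iff]
  omega

theorem Ici_eq_univ_erase {i j : Fin n} (hj : (j : ℕ) = 0) (hij : (j : ℕ) + 1 = i) :
    Finset.Ici i = Finset.univ.erase j := by
  ext k
  simp only [Finset.mem_Ici, Finset.mem_erase, Finset.mem_univ, and_true, ne_eq,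
    Fin.le_def, Fin.ext_iff]
  omega

end Fin

namespace Finset

theorem exists_sdiff_eq_singleton_of_card_add_one {A S : Finset α} (hAS : A ⊆ S)
    (hcard : #A + 1 = #S) : ∃ a, S \ A = {a} ∧ S.erase a = A := by
  obtain ⟨a, ha⟩ := card_eq_one.mp (show #(S \ A) = 1 by rw [card_sdiff_of_subset hAS]; omega)
  refine ⟨a, ha, ?_⟩
  rw [← sdiff_singleton_eq_erase, ← ha, sdiff_sdiff_eq_self hAS]

theorem sdiff_subset_pair_of_inter_subset {S A B B' : Finset α} {a c : α}
    (hA : S \ A ⊆ {a}) (hBA : B' ∩ A ⊆ B) (hc : S \ (B ∪ B') ⊆ {c}) :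
    S \ B ⊆ {a, c} := by
  intro x hx
  obtain ⟨hxS, hxB⟩ := mem_sdiff.mp hx
  by_cases hxB' : x ∈ B'
  · have hxA : x ∉ A := fun hxA => hxB (hBA (mem_inter.mpr ⟨hxB', hxA⟩))
    exact mem_insert.mpr (Or.inl (mem_singleton.mp (hA (mem_sdiff.mpr ⟨hxS, hxA⟩))))
  · exact mem_insert_of_mem (hc (mem_sdiff.mpr ⟨hxS, by simp [hxB, hxB']⟩))

end Finset

open Finset

theorem orderConsistent_of_sdiff_subset_pair {S : Finset α} {𝒮₁ 𝒮₂ : Set (Finset α)}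
    {a₁ a₂ c : α} {B₁ B₂ : Finset α} (hS : 2 ≤ #S)
    (hB₁ : S \ B₁ ⊆ {a₂, c}) (hB₂ : S \ B₂ ⊆ {a₁, c})
    (h₁ : S.erase a₁ ∈ 𝒮₁) (h₂ : S.erase a₂ ∈ 𝒮₂)
    (hx₁ : ∀ x ∈ B₁, {x} ∈ 𝒮₁) (hx₂ : ∀ x ∈ B₂, {x} ∈ 𝒮₂) :
    OrderConsistent S 𝒮₁ 𝒮₂ := by
  intro e he heS
  have hmem : ∀ i, e i ∈ S := fun i => heS ▸ mem_image_of_mem e (mem_univ i)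
  let first : Fin #S := ⟨0, by omega⟩
  let last : Fin #S := ⟨#S - 1, by omega⟩
  by_cases h_first : e first ∈ B₁
  · refine ⟨first, Or.inl ?_⟩
    rw [Fin.Iic_eq_singleton_of_val_eq_zero rfl, image_singleton]
    exact hx₁ _ h_first
  by_cases h_last : e last ∈ B₂
  · refine ⟨last, Or.inr ?_⟩
    rw [Fin.Ici_eq_singleton_of_val_add_one_eq (show #S - 1 + 1 = #S by omega), image_singleton]
    exact hx₂ _ h_last
  obtain h_last' | h_last' : e last = a₁ ∨ e last = c := by
    simpa using hB₂ (mem_sdiff.mpr ⟨hmem last, h_last⟩)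
  · refine ⟨⟨#S - 2, by omega⟩, Or.inl ?_⟩
    rw [Fin.Iic_eq_univ_erase (j := last) (show #S - 2 + 1 = #S - 1 by omega)
      (show #S - 1 + 1 = #S by omega), image_erase he, heS, h_last']
    exact h₁
  · have h_first_ne : e first ≠ c := fun h =>
      absurd (he (h.trans h_last'.symm)) (by simp [first, last, Fin.ext_iff]; omega)
    have h_first' : e first = a₂ := by
      simpa [h_first_ne] using hB₁ (mem_sdiff.mpr ⟨hmem first, h_first⟩)
    refine ⟨⟨1, by omega⟩, Or.inr ?_⟩
    rw [Fin.Ici_eq_univ_erase (j := first) rfl rfl, image_erase he, heS, h_first']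
    exact h₂

/-- Sufficiency in Theorem 4.1: an `S`-pair admitting the witness configuration is
order consistent. -/
theorem stmt8 (S : Finset α) (𝒮₁ 𝒮₂ : Set (Finset α)) (hn : 3 ≤ S.card)
    (h : IsSPair S 𝒮₁ 𝒮₂) (hw : SPairWitness S 𝒮₁ 𝒮₂) :
    OrderConsistent S 𝒮₁ 𝒮₂ := by
  obtain ⟨A₁, hA₁, A₂, hA₂, B₁, B₂, hcA₁, hcA₂, -, hB₁S, hB₂S, hcB₁, hcB₂,
    hBA₁, hBA₂, -, hcK, hx₁, hx₂⟩ := hw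
  obtain ⟨hS₁, hS₂, -⟩ := h
  obtain ⟨a₁, ha₁, rfl⟩ := exists_sdiff_eq_singleton_of_card_add_one (hS₁ A₁ hA₁) (by omega)
  obtain ⟨a₂, ha₂, rfl⟩ := exists_sdiff_eq_singleton_of_card_add_one (hS₂ A₂ hA₂) (by omega)
  obtain ⟨c, hc, -⟩ := exists_sdiff_eq_singleton_of_card_add_one (union_subset hB₁S hB₂S)
    (by have := card_union_add_card_inter B₁ B₂; omega)
  refine orderConsistent_of_sdiff_subset_pair (c := c) (by omega) ?_ ?_ hA₁ hA₂ hx₁ hx₂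
  · exact sdiff_subset_pair_of_inter_subset ha₂.subset (hBA₂.le.trans inter_subset_left) hc.subset
  · exact sdiff_subset_pair_of_inter_subset ha₁.subset (hBA₁.le.trans inter_subset_right)
      (by rw [union_comm]; exact hc.subset)
end

section
/- Let (S1, S2) be an order-consistent S-pair on a finite set S with |S| = n ≥ 3. Then there exist A1 ∈ S1, A2 ∈ S2 with |A1| = |A2| = n-1 and A1 ≠ A2, and sets B1, B2 ⊆ S with |B1| = |B2| = n-2, such that for i = 1,2: Bi ∩ Ai = B1 ∩ B2, B1 ∩ B2 is an (n-3)-subset of A1 ∩ A2, and every singleton subset of Bi lies in Si. -/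
variable {α : Type*} [DecidableEq α]

section Util

variable {F : Set (Finset α)}

lemma pair_mem (h2 : PropS2 F) {x y : α} (hx : ({x} : Finset α) ∈ F)
    (hy : ({y} : Finset α) ∈ F) (hxy : x ≠ y) : ({x, y} : Finset α) ∈ F := by
  have hi : ({x} : Finset α) ∩ {y} = ∅ := by
    apply Finset.singleton_inter_of_notMem; simp [hxy]
  have := h2 {x} hx {y} hy (by simp) (by rw [hi]; simp)
  simpa using this

lemma sub_clash (h1 : PropS1 F) {t x : α} (ht : ({t} : Finset α) ∈ F)
    (htx : ({t, x} : Finset α) ∈ F) (hne : t ≠ x) : ({x} : Finset α) ∈ F := by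
  have hcard : ({t, x} : Finset α).card = ({t} : Finset α).card + 1 := by
    rw [Finset.card_pair hne]; simp
  have hss : ({t} : Finset α) ⊂ {t, x} := by
    constructor
    · intro a ha; simp at ha; simp [ha]
    · intro hsub
      have := hsub (by simp : x ∈ ({t, x} : Finset α))
      simp at this; exact hne this.symm
  exact h1 {t, x} htx {t} ht hcard hss {x} (by intro a ha; simp at ha; simp [ha]) (by simp)

lemma upLevel (h2 : PropS2 F) {U : Finset α} {j : ℕ} (hj : 1 ≤ j)
    (hfull : ∀ C ⊆ U, C.card = j → C ∈ F) :
    ∀ C ⊆ U, C.card = j + 1 → C ∈ F := by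
  intro C hCU hCcard
  have h2card : 1 < C.card := by omega
  obtain ⟨u, hu⟩ : ∃ u, u ∈ C := Finset.card_pos.mp (by omega)
  obtain ⟨v, hv, hvu⟩ := Finset.exists_mem_ne h2card u
  have hA : C.erase u ∈ F := hfull _ ((Finset.erase_subset _ _).trans hCU)
    (by rw [Finset.card_erase_of_mem hu]; omega)
  have hB : C.erase v ∈ F := hfull _ ((Finset.erase_subset _ _).trans hCU)
    (by rw [Finset.card_erase_of_mem hv]; omega)
  have hint : C.erase u ∩ C.erase v = (C.erase u).erase v := by
    ext a; simp only [Finset.mem_inter, Finset.mem_erase]; tauto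
  have hicard : (C.erase u ∩ C.erase v).card = (C.erase u).card - 1 := by
    rw [hint, Finset.card_erase_of_mem (by simp [Finset.mem_erase, hv, hvu])]
  have huni : C.erase u ∪ C.erase v = C := by
    ext a; simp only [Finset.mem_union, Finset.mem_erase]
    constructor
    · rintro (⟨_, h⟩ | ⟨_, h⟩) <;> exact h
    · intro ha
      rcases eq_or_ne a u with rfl | hau
      · right; exact ⟨fun h => hvu h.symm, ha⟩
      · left; exact ⟨hau, ha⟩
  have := h2 _ hA _ hB (by rw [Finset.card_erase_of_mem hu, Finset.card_erase_of_mem hv]) hicard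
  rwa [huni] at this

lemma fullUp (h2 : PropS2 F) {U : Finset α} {j : ℕ} (hj : 1 ≤ j)
    (hfull : ∀ C ⊆ U, C.card = j → C ∈ F) :
    ∀ d, ∀ C ⊆ U, C.card = j + d → C ∈ F := by
  intro d
  induction d with
  | zero => exact hfull
  | succ d ih =>
      have := upLevel h2 (by omega : 1 ≤ j + d) ih
      intro C hCU hC; exact this C hCU (by omega)

lemma fullUpTo (h2 : PropS2 F) {U : Finset α} {j l : ℕ} (hj : 1 ≤ j) (hjl : j ≤ l)
    (hfull : ∀ C ⊆ U, C.card = j → C ∈ F) :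
    ∀ C ⊆ U, C.card = l → C ∈ F := by
  obtain ⟨d, rfl⟩ := Nat.exists_eq_add_of_le hjl
  exact fullUp h2 hj hfull d

lemma singletonsFull (h2 : PropS2 F) {U : Finset α} (hT : ∀ t ∈ U, ({t} : Finset α) ∈ F) :
    ∀ l, 1 ≤ l → ∀ C ⊆ U, C.card = l → C ∈ F := by
  intro l hl
  apply fullUpTo h2 le_rfl hl
  intro C hCU hC
  obtain ⟨t, rfl⟩ := Finset.card_eq_one.mp hC
  exact hT t (by simpa using hCU)

lemma memTop (h2 : PropS2 F) {U : Finset α} (hU : U.Nonempty)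
    (hT : ∀ t ∈ U, ({t} : Finset α) ∈ F) : U ∈ F :=
  singletonsFull h2 hT U.card (Finset.card_pos.mpr hU) U le_rfl rfl

lemma starMerge (h1 : PropS1 F) (h2 : PropS2 F) {x : α} {V : Finset α} (hxV : x ∉ V)
    {k : ℕ} (hk : 1 ≤ k) (h : ∀ C ⊆ V, C.card = k → insert x C ∈ F) :
    ∀ W ⊆ insert x V, W.card = k + 1 → W ∈ F := by
  intro W hWV hWcard
  by_cases hxW : x ∈ W
  · have h1' : W.erase x ⊆ V := by
      intro a ha
      have := hWV (Finset.mem_of_mem_erase ha)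
      simp only [Finset.mem_insert] at this
      rcases this with rfl | h
      · exact absurd rfl (Finset.ne_of_mem_erase ha)
      · exact h
    have := h (W.erase x) h1' (by rw [Finset.card_erase_of_mem hxW]; omega)
    rwa [Finset.insert_erase hxW] at this
  · have hWVs : W ⊆ V := by
      intro a ha
      rcases Finset.mem_insert.mp (hWV ha) with rfl | h
      · exact absurd ha hxW
      · exact h
    have h2card : 1 < W.card := by omega
    obtain ⟨u, hu⟩ : ∃ u, u ∈ W := Finset.card_pos.mp (by omega)
    obtain ⟨v, hv, hvu⟩ := Finset.exists_mem_ne h2card u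
    have hAe : W.erase u ⊆ V := (Finset.erase_subset _ _).trans hWVs
    have hBe : W.erase v ⊆ V := (Finset.erase_subset _ _).trans hWVs
    have hA : insert x (W.erase u) ∈ F := h _ hAe (by rw [Finset.card_erase_of_mem hu]; omega)
    have hB : insert x (W.erase v) ∈ F := h _ hBe (by rw [Finset.card_erase_of_mem hv]; omega)
    have hacard : (insert x (W.erase u)).card = k + 1 := by
      rw [Finset.card_insert_of_notMem (fun hc => hxW (Finset.mem_of_mem_erase hc)),
        Finset.card_erase_of_mem hu]; omega
    have hbcard : (insert x (W.erase v)).card = k + 1 := by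
      rw [Finset.card_insert_of_notMem (fun hc => hxW (Finset.mem_of_mem_erase hc)),
        Finset.card_erase_of_mem hv]; omega
    have hint : insert x (W.erase u) ∩ insert x (W.erase v) = insert x ((W.erase u).erase v) := by
      ext a
      simp only [Finset.mem_inter, Finset.mem_insert, Finset.mem_erase]
      constructor
      · rintro ⟨rfl | ⟨hau, haW⟩, h2⟩
        · exact Or.inl rfl
        · rcases h2 with rfl | ⟨hav, _⟩
          · exact Or.inl rfl
          · exact Or.inr ⟨hav, hau, haW⟩
      · rintro (rfl | ⟨hav, hau, haW⟩)
        · exact ⟨Or.inl rfl, Or.inl rfl⟩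
        · exact ⟨Or.inr ⟨hau, haW⟩, Or.inr ⟨hav, haW⟩⟩
    have hicard : (insert x (W.erase u) ∩ insert x (W.erase v)).card
        = (insert x (W.erase u)).card - 1 := by
      rw [hint, hacard, Finset.card_insert_of_notMem
        (fun hc => hxW (Finset.mem_of_mem_erase (Finset.mem_of_mem_erase hc))),
        Finset.card_erase_of_mem (Finset.mem_erase.mpr ⟨hvu, hv⟩),
        Finset.card_erase_of_mem hu]
      omega
    have huni : insert x (W.erase u) ∪ insert x (W.erase v) = insert x W := by
      ext a
      simp only [Finset.mem_union, Finset.mem_insert, Finset.mem_erase]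
      constructor
      · rintro ((rfl | ⟨_, h⟩) | (rfl | ⟨_, h⟩)) <;> simp [*]
      · rintro (rfl | haW)
        · exact Or.inl (Or.inl rfl)
        · rcases eq_or_ne a u with rfl | hau
          · exact Or.inr (Or.inr ⟨fun h => hvu h.symm, haW⟩)
          · exact Or.inl (Or.inr ⟨hau, haW⟩)
    have hbig : insert x W ∈ F := by
      have := h2 _ hA _ hB (by rw [hacard, hbcard]) hicard
      rwa [huni] at this
    have hbigcard : (insert x W).card = (insert x (W.erase u)).card + 1 := by
      rw [Finset.card_insert_of_notMem hxW, hacard]; omega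
    have hss : insert x (W.erase u) ⊂ insert x W := by
      constructor
      · exact Finset.insert_subset_insert _ (Finset.erase_subset _ _)
      · intro hc
        have := hc (Finset.mem_insert_of_mem hu)
        rcases Finset.mem_insert.mp this with rfl | h
        · exact hxW hu
        · exact (Finset.notMem_erase u W) h
    exact h1 _ hbig _ hA hbigcard hss W (Finset.subset_insert _ _) (by omega)

lemma descendStep (h1 : PropS1 F) {U : Finset α} {x : α} {j : ℕ} (hj : 1 ≤ j)
    (hjU : j + 1 ≤ U.card)
    (hup : ∀ C ⊆ U, C.card = j + 1 → C ∈ F)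
    (hcol : ∀ C ⊆ U.erase x, C.card = j → C ∈ F) :
    ∀ C ⊆ U, C.card = j → C ∈ F := by
  intro C hCU hCcard
  by_cases hxC : x ∈ C
  · obtain ⟨t, htU, htC⟩ : ∃ t ∈ U, t ∉ C := by
      by_contra hc
      push_neg at hc
      have := Finset.card_le_card hc
      omega
    have hA : insert t C ∈ F := hup _ (Finset.insert_subset htU hCU)
      (by rw [Finset.card_insert_of_notMem htC]; omega)
    have hBsub : (insert t C).erase x ⊆ U.erase x :=
      Finset.erase_subset_erase _ (Finset.insert_subset htU hCU)
    have hB : (insert t C).erase x ∈ F := hcol _ hBsub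
      (by rw [Finset.card_erase_of_mem (Finset.mem_insert_of_mem hxC),
          Finset.card_insert_of_notMem htC]; omega)
    have hcard : (insert t C).card = ((insert t C).erase x).card + 1 := by
      rw [Finset.card_erase_of_mem (Finset.mem_insert_of_mem hxC),
        Finset.card_insert_of_notMem htC]
      omega
    have hss : (insert t C).erase x ⊂ insert t C := by
      apply Finset.erase_ssubset (Finset.mem_insert_of_mem hxC)
    exact h1 _ hA _ hB hcard hss C (Finset.subset_insert _ _)
      (by rw [Finset.card_erase_of_mem (Finset.mem_insert_of_mem hxC),
        Finset.card_insert_of_notMem htC]; omega)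
  · exact hcol C (fun a ha => Finset.mem_erase.mpr ⟨fun h => hxC (h ▸ ha), hCU ha⟩) hCcard

lemma descendMany (h1 : PropS1 F) {U : Finset α} {x : α} {lo : ℕ} (hlo : 1 ≤ lo) :
    ∀ d, lo + d ≤ U.card →
    (∀ C ⊆ U, C.card = lo + d → C ∈ F) →
    (∀ j, lo ≤ j → j < lo + d → ∀ C ⊆ U.erase x, C.card = j → C ∈ F) →
    ∀ C ⊆ U, C.card = lo → C ∈ F := by
  intro d
  induction d with
  | zero => intro _ h _; exact h
  | succ d ih =>
      intro hcard hanchor hcol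
      apply ih (by omega)
      · have := descendStep h1 (by omega : 1 ≤ lo + d) (by omega)
          (by intro C hC hc; exact hanchor C hC (by omega)) (hcol (lo + d) (by omega) (by omega))
        exact this
      · intro j hj1 hj2; exact hcol j hj1 (by omega)

end Util


section Swap

lemma image_rev_Iic {n : ℕ} (i : Fin n) :
    (Finset.Iic i).image Fin.rev = Finset.Ici i.rev := by
  ext j
  simp only [Finset.mem_image, Finset.mem_Iic, Finset.mem_Ici]
  constructor
  · rintro ⟨k, hk, rfl⟩
    exact Fin.rev_le_rev.mpr hk
  · intro hj
    refine ⟨j.rev, ?_, j.rev_rev⟩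
    have := Fin.rev_le_rev.mpr hj
    simpa using this

lemma image_rev_Ici {n : ℕ} (i : Fin n) :
    (Finset.Ici i).image Fin.rev = Finset.Iic i.rev := by
  ext j
  simp only [Finset.mem_image, Finset.mem_Ici, Finset.mem_Iic]
  constructor
  · rintro ⟨k, hk, rfl⟩
    exact Fin.rev_le_rev.mpr hk
  · intro hj
    refine ⟨j.rev, ?_, j.rev_rev⟩
    rw [← Fin.rev_rev i]
    exact Fin.rev_le_rev.mpr hj

lemma oc_swap {S : Finset α} {F1 F2 : Set (Finset α)}
    (h : OrderConsistent S F1 F2) : OrderConsistent S F2 F1 := by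
  intro e he himg
  have hrevinj : Function.Injective (fun i : Fin S.card => e i.rev) :=
    he.comp (fun a b hab => by simpa using congrArg Fin.rev hab)
  have hrevimg : Finset.univ.image (fun i : Fin S.card => e i.rev) = S := by
    have huniv : (Finset.univ : Finset (Fin S.card)).image Fin.rev = Finset.univ := by
      apply Finset.eq_univ_of_forall
      intro j
      exact Finset.mem_image.mpr ⟨j.rev, Finset.mem_univ _, j.rev_rev⟩
    calc Finset.univ.image (fun i : Fin S.card => e i.rev)
        = (Finset.univ.image Fin.rev).image e := by
          rw [Finset.image_image]; rfl
      _ = Finset.univ.image e := by rw [huniv]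
      _ = S := himg
  obtain ⟨i, hi⟩ := h _ hrevinj hrevimg
  refine ⟨i.rev, ?_⟩
  have hIic : (Finset.Iic i).image (fun j : Fin S.card => e j.rev)
      = (Finset.Ici i.rev).image e := by
    rw [← image_rev_Iic, Finset.image_image]; rfl
  have hIci : (Finset.Ici i).image (fun j : Fin S.card => e j.rev)
      = (Finset.Iic i.rev).image e := by
    rw [← image_rev_Ici, Finset.image_image]; rfl
  rw [hIic, hIci] at hi
  tauto

end Swap

section Reduction

/-- link of `z` in `F`, within ground set `X`. -/
def Lk (X : Finset α) (z : α) (F : Set (Finset α)) : Set (Finset α) :=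
  {A | A ⊆ X.erase z ∧ insert z A ∈ F}

/-- deletion of `z` from `F`, within ground set `X`. -/
def Dl (X : Finset α) (z : α) (F : Set (Finset α)) : Set (Finset α) :=
  {A | A ⊆ X.erase z ∧ A ∈ F}

lemma Dl_propS1 {X : Finset α} {z : α} {F : Set (Finset α)} (h : PropS1 F) :
    PropS1 (Dl X z F) := by
  rintro A ⟨hA1, hA2⟩ B ⟨hB1, hB2⟩ hcard hss C hCA hCcard
  exact ⟨hCA.trans hA1, h A hA2 B hB2 hcard hss C hCA hCcard⟩

lemma Dl_propS2 {X : Finset α} {z : α} {F : Set (Finset α)} (h : PropS2 F) :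
    PropS2 (Dl X z F) := by
  rintro A ⟨hA1, hA2⟩ B ⟨hB1, hB2⟩ hcard hint
  exact ⟨Finset.union_subset hA1 hB1, h A hA2 B hB2 hcard hint⟩

lemma Lk_propS1 {X : Finset α} {z : α} {F : Set (Finset α)} (h : PropS1 F) :
    PropS1 (Lk X z F) := by
  rintro A ⟨hA1, hA2⟩ B ⟨hB1, hB2⟩ hcard hss C hCA hCcard
  have hzA : z ∉ A := fun hc => (Finset.notMem_erase z X) (hA1 hc)
  have hzB : z ∉ B := fun hc => (Finset.notMem_erase z X) (hB1 hc)
  have hzC : z ∉ C := fun hc => hzA (hCA hc)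
  refine ⟨hCA.trans hA1, ?_⟩
  have hcard' : (insert z A).card = (insert z B).card + 1 := by
    rw [Finset.card_insert_of_notMem hzA, Finset.card_insert_of_notMem hzB]; omega
  have hss' : insert z B ⊂ insert z A := by
    constructor
    · exact Finset.insert_subset_insert _ hss.subset
    · intro hc
      obtain ⟨a, haA, haB⟩ := Finset.exists_of_ssubset hss
      have := hc (Finset.mem_insert_of_mem haA)
      rcases Finset.mem_insert.mp this with rfl | h'
      · exact hzA haA
      · exact haB h'
  exact h _ hA2 _ hB2 hcard' hss' (insert z C) (Finset.insert_subset_insert _ hCA)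
    (by rw [Finset.card_insert_of_notMem hzC, Finset.card_insert_of_notMem hzB]; omega)

lemma Lk_propS2 {X : Finset α} {z : α} {F : Set (Finset α)} (h : PropS2 F) :
    PropS2 (Lk X z F) := by
  rintro A ⟨hA1, hA2⟩ B ⟨hB1, hB2⟩ hcard hint
  rcases eq_or_ne A B with rfl | hAB
  · rw [Finset.union_self]; exact ⟨hA1, hA2⟩
  have hzA : z ∉ A := fun hc => (Finset.notMem_erase z X) (hA1 hc)
  have hzB : z ∉ B := fun hc => (Finset.notMem_erase z X) (hB1 hc)
  refine ⟨Finset.union_subset hA1 hB1, ?_⟩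
  have hcard' : (insert z A).card = (insert z B).card := by
    rw [Finset.card_insert_of_notMem hzA, Finset.card_insert_of_notMem hzB]; omega
  have hintEq : insert z A ∩ insert z B = insert z (A ∩ B) := by
    ext a
    simp only [Finset.mem_inter, Finset.mem_insert]
    tauto
  have hint' : (insert z A ∩ insert z B).card = (insert z A).card - 1 := by
    rw [hintEq, Finset.card_insert_of_notMem (fun hc => hzA (Finset.mem_inter.mp hc).1),
      Finset.card_insert_of_notMem hzA]
    have hApos : 1 ≤ A.card := by
      rcases Finset.eq_empty_or_nonempty A with rfl | hA
      · simp only [Finset.card_empty] at hcard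
        exact absurd (Finset.card_eq_zero.mp hcard.symm) (Ne.symm hAB)
      · exact Finset.card_pos.mpr hA
    omega
  have := h _ hA2 _ hB2 hcard' hint'
  have huni : insert z A ∪ insert z B = insert z (A ∪ B) := by
    ext a; simp only [Finset.mem_union, Finset.mem_insert]; tauto
  rwa [huni] at this

end Reduction

section RedOC

lemma image_cast_Iic {n m : ℕ} (h : n = m) (e0 : Fin m → α) (i : Fin n) :
    (Finset.Iic i).image (fun k => e0 (Fin.cast h k)) =
      (Finset.Iic (Fin.cast h i)).image e0 := by
  ext y
  simp only [Finset.mem_image, Finset.mem_Iic]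
  constructor
  · rintro ⟨k, hk, rfl⟩
    exact ⟨Fin.cast h k, by simpa only [Fin.le_def, Fin.coe_cast] using hk, rfl⟩
  · rintro ⟨k, hk, rfl⟩
    have hck : Fin.cast h (Fin.cast h.symm k) = k := by ext; simp
    exact ⟨Fin.cast h.symm k, by simpa only [Fin.le_def, Fin.coe_cast] using hk, by rw [hck]⟩

lemma image_cast_Ici {n m : ℕ} (h : n = m) (e0 : Fin m → α) (i : Fin n) :
    (Finset.Ici i).image (fun k => e0 (Fin.cast h k)) =
      (Finset.Ici (Fin.cast h i)).image e0 := by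
  ext y
  simp only [Finset.mem_image, Finset.mem_Ici]
  constructor
  · rintro ⟨k, hk, rfl⟩
    exact ⟨Fin.cast h k, by simpa only [Fin.le_def, Fin.coe_cast] using hk, rfl⟩
  · rintro ⟨k, hk, rfl⟩
    have hck : Fin.cast h (Fin.cast h.symm k) = k := by ext; simp
    exact ⟨Fin.cast h.symm k, by simpa only [Fin.le_def, Fin.coe_cast] using hk, by rw [hck]⟩

lemma cons_image_Iic_zero {n : ℕ} (z : α) (e' : Fin n → α) :
    (Finset.Iic (0 : Fin (n + 1))).image (Fin.cons z e') = {z} := by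
  ext y
  simp only [Finset.mem_image, Finset.mem_Iic, Finset.mem_singleton]
  constructor
  · rintro ⟨k, hk, rfl⟩
    have : k = 0 := le_antisymm hk (Fin.zero_le _)
    subst this; simp
  · rintro rfl
    exact ⟨0, le_rfl, by simp⟩

lemma cons_image_Iic_succ {n : ℕ} (z : α) (e' : Fin n → α) (j : Fin n) :
    (Finset.Iic j.succ).image (Fin.cons z e') = insert z ((Finset.Iic j).image e') := by
  ext y
  simp only [Finset.mem_image, Finset.mem_Iic, Finset.mem_insert]
  constructor
  · rintro ⟨k, hk, rfl⟩
    induction k using Fin.cases with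
    | zero => left; simp
    | succ k' =>
        right
        exact ⟨k', Fin.succ_le_succ_iff.mp hk, by simp⟩
  · rintro (rfl | ⟨k', hk', rfl⟩)
    · exact ⟨0, Fin.zero_le _, by simp⟩
    · exact ⟨k'.succ, Fin.succ_le_succ_iff.mpr hk', by simp⟩

lemma cons_image_Ici_succ {n : ℕ} (z : α) (e' : Fin n → α) (j : Fin n) :
    (Finset.Ici j.succ).image (Fin.cons z e') = (Finset.Ici j).image e' := by
  ext y
  simp only [Finset.mem_image, Finset.mem_Ici]
  constructor
  · rintro ⟨k, hk, rfl⟩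
    induction k using Fin.cases with
    | zero =>
        exact absurd (le_antisymm (Fin.zero_le _) hk) (by simp [Fin.ext_iff])
    | succ k' =>
        exact ⟨k', Fin.succ_le_succ_iff.mp hk, by simp⟩
  · rintro ⟨k', hk', rfl⟩
    exact ⟨k'.succ, Fin.succ_le_succ_iff.mpr hk', by simp⟩

lemma cons_image_univ {n : ℕ} (z : α) (e' : Fin n → α) :
    (Finset.univ : Finset (Fin (n + 1))).image (Fin.cons z e') =
      insert z (Finset.univ.image e') := by
  ext y
  simp only [Finset.mem_image, Finset.mem_univ, true_and, Finset.mem_insert]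
  constructor
  · rintro ⟨k, rfl⟩
    induction k using Fin.cases with
    | zero => left; simp
    | succ k' => right; exact ⟨k', by simp⟩
  · rintro (rfl | ⟨k', rfl⟩)
    · exact ⟨0, by simp⟩
    · exact ⟨k'.succ, by simp⟩

/-- Reduction: if `{z} ∉ F1` and `X ∉ F2`, then the pair `(link z F1, delete z F2)`
is order consistent on `X.erase z`. -/
lemma red_oc {X : Finset α} {F1 F2 : Set (Finset α)} {z : α} (hzX : z ∈ X)
    (hz1 : ({z} : Finset α) ∉ F1) (hX2 : X ∉ F2)
    (hoc : OrderConsistent X F1 F2) :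
    OrderConsistent (X.erase z) (Lk X z F1) (Dl X z F2) := by
  intro e' he' himg'
  have hcard : (X.erase z).card + 1 = X.card := Finset.card_erase_add_one hzX
  have hzrange : z ∉ Set.range e' := by
    intro hc
    obtain ⟨k, hk⟩ := hc
    have hmem : e' k ∈ X.erase z := by
      rw [← himg']; exact Finset.mem_image.mpr ⟨k, Finset.mem_univ _, rfl⟩
    rw [hk] at hmem
    exact Finset.notMem_erase z X hmem
  set e0 : Fin ((X.erase z).card + 1) → α := Fin.cons z e' with he0def
  have he0inj : Function.Injective e0 := Fin.cons_injective_iff.mpr ⟨hzrange, he'⟩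
  set e : Fin X.card → α := fun i => e0 (Fin.cast hcard.symm i) with hedef
  have heinj : Function.Injective e := by
    intro a b hab
    have := he0inj hab
    simpa [Fin.ext_iff] using this
  have himg : Finset.univ.image e = X := by
    have h1 : Finset.univ.image e = ((Finset.univ : Finset (Fin X.card)).image
        (Fin.cast hcard.symm)).image e0 := by
      rw [Finset.image_image]; rfl
    have h2 : (Finset.univ : Finset (Fin X.card)).image (Fin.cast hcard.symm) =
        Finset.univ := by
      apply Finset.eq_univ_of_forall
      intro j
      exact Finset.mem_image.mpr ⟨Fin.cast hcard j, Finset.mem_univ _, by simp [Fin.ext_iff]⟩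
    rw [h1, h2, cons_image_univ, himg', Finset.insert_erase hzX]
  obtain ⟨i, hi⟩ := hoc e heinj himg
  have hIic : (Finset.Iic i).image e = (Finset.Iic (Fin.cast hcard.symm i)).image e0 :=
    image_cast_Iic _ _ _
  have hIci : (Finset.Ici i).image e = (Finset.Ici (Fin.cast hcard.symm i)).image e0 :=
    image_cast_Ici _ _ _
  rw [hIic, hIci] at hi
  rcases Fin.eq_zero_or_eq_succ (Fin.cast hcard.symm i) with h0 | ⟨j, hj⟩
  · rw [h0] at hi
    rcases hi with hi | hi
    · rw [cons_image_Iic_zero] at hi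
      exact absurd hi hz1
    · exfalso
      have : (Finset.Ici (0 : Fin ((X.erase z).card + 1))) = Finset.univ := by
        apply Finset.eq_univ_of_forall; intro k; simp
      rw [this] at hi
      rw [cons_image_univ, himg', Finset.insert_erase hzX] at hi
      exact hX2 hi
  · rw [hj] at hi
    rcases hi with hi | hi
    · rw [cons_image_Iic_succ] at hi
      refine ⟨j, Or.inl ⟨?_, hi⟩⟩
      intro a ha
      obtain ⟨k, _, rfl⟩ := Finset.mem_image.mp ha
      rw [← himg']
      exact Finset.mem_image.mpr ⟨k, Finset.mem_univ _, rfl⟩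
    · rw [cons_image_Ici_succ] at hi
      refine ⟨j, Or.inr ⟨?_, hi⟩⟩
      intro a ha
      obtain ⟨k, _, rfl⟩ := Finset.mem_image.mp ha
      rw [← himg']
      exact Finset.mem_image.mpr ⟨k, Finset.mem_univ _, rfl⟩

end RedOC

section Structures

/-- Type (A) structure: distinct `a1, a2, c` with the big sets and singleton-richness. -/
def AStruct (X : Finset α) (F1 F2 : Set (Finset α)) : Prop :=
  ∃ a1 ∈ X, ∃ a2 ∈ X, ∃ c ∈ X, a1 ≠ a2 ∧ c ≠ a1 ∧ c ≠ a2 ∧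
    X.erase a1 ∈ F1 ∧ X.erase a2 ∈ F2 ∧
    (∀ x ∈ X, x ≠ a2 → x ≠ c → ({x} : Finset α) ∈ F1) ∧
    (∀ x ∈ X, x ≠ a1 → x ≠ c → ({x} : Finset α) ∈ F2)

/-- Type (B) structure: a pivot `a` and a level `k` with complementary binomial fullness. -/
def BStruct (X : Finset α) (F1 F2 : Set (Finset α)) : Prop :=
  ∃ a ∈ X, ∃ k, 1 ≤ k ∧ k ≤ X.card - 1 ∧
    (∀ C ⊆ X.erase a, C.card = k → C ∈ F1) ∧
    (∀ C ⊆ X.erase a, C.card = X.card - k → C ∈ F2)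

lemma AStruct.swap {X : Finset α} {F1 F2 : Set (Finset α)} (h : AStruct X F2 F1) :
    AStruct X F1 F2 := by
  obtain ⟨a1, h1, a2, h2, c, hc, hne, hca1, hca2, hb1, hb2, hs1, hs2⟩ := h
  exact ⟨a2, h2, a1, h1, c, hc, Ne.symm hne, hca2, hca1, hb2, hb1, hs2, hs1⟩

lemma BStruct.swap {X : Finset α} {F1 F2 : Set (Finset α)} (h : BStruct X F2 F1) :
    BStruct X F1 F2 := by
  obtain ⟨a, haX, k, hk1, hk2, hf2, hf1⟩ := h
  have hXcard : 1 ≤ X.card := Finset.card_pos.mpr ⟨a, haX⟩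
  refine ⟨a, haX, X.card - k, by omega, by omega, ?_, ?_⟩
  · intro C hC hc; exact hf1 C hC hc
  · intro C hC hc; exact hf2 C hC (by omega)

lemma two_bigs {F : Set (Finset α)} (h2 : PropS2 F) {X : Finset α} {a b : α}
    (haX : a ∈ X) (hbX : b ∈ X) (hab : a ≠ b)
    (ha : X.erase a ∈ F) (hb : X.erase b ∈ F) : X ∈ F := by
  have hint : X.erase a ∩ X.erase b = (X.erase a).erase b := by
    ext t; simp only [Finset.mem_inter, Finset.mem_erase]; tauto
  have hicard : (X.erase a ∩ X.erase b).card = (X.erase a).card - 1 := by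
    rw [hint, Finset.card_erase_of_mem (Finset.mem_erase.mpr ⟨Ne.symm hab, hbX⟩)]
  have hcard : (X.erase a).card = (X.erase b).card := by
    rw [Finset.card_erase_of_mem haX, Finset.card_erase_of_mem hbX]
  have huni : X.erase a ∪ X.erase b = X := by
    ext t
    simp only [Finset.mem_union, Finset.mem_erase]
    constructor
    · rintro (⟨_, h⟩ | ⟨_, h⟩) <;> exact h
    · intro ht
      rcases eq_or_ne t a with rfl | hta
      · exact Or.inr ⟨hab, ht⟩
      · exact Or.inl ⟨hta, ht⟩
  have := h2 _ ha _ hb hcard hicard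
  rwa [huni] at this

lemma exists_not_single {F : Set (Finset α)} (h2 : PropS2 F) {X : Finset α}
    (hX : X ∉ F) (hne : X.Nonempty) : ∃ z ∈ X, ({z} : Finset α) ∉ F := by
  by_contra hc
  push_neg at hc
  exact hX (memTop h2 hne hc)

lemma tri_mem {F : Set (Finset α)} (h2 : PropS2 F) {a x y : α}
    (hax : ({a, x} : Finset α) ∈ F) (hay : ({a, y} : Finset α) ∈ F)
    (hxy : x ≠ y) (hxa : x ≠ a) (hya : y ≠ a) : ({a, x, y} : Finset α) ∈ F := by
  have hcx : ({a, x} : Finset α).card = 2 := Finset.card_pair (Ne.symm hxa)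
  have hcy : ({a, y} : Finset α).card = 2 := Finset.card_pair (Ne.symm hya)
  have hint : ({a, x} : Finset α) ∩ {a, y} = {a} := by
    ext t
    simp only [Finset.mem_inter, Finset.mem_insert, Finset.mem_singleton]
    constructor
    · rintro ⟨rfl | rfl, h2'⟩
      · rfl
      · rcases h2' with rfl | rfl
        · exact absurd rfl hxa
        · exact absurd rfl hxy
    · rintro rfl; exact ⟨Or.inl rfl, Or.inl rfl⟩
  have := h2 _ hax _ hay (by rw [hcx, hcy]) (by rw [hint, hcx]; simp)
  have huni : ({a, x} : Finset α) ∪ {a, y} = {a, x, y} := by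
    ext t
    simp only [Finset.mem_union, Finset.mem_insert, Finset.mem_singleton]
    tauto
  rwa [huni] at this

lemma pairs_of_tri {F : Set (Finset α)} (h1 : PropS1 F) {a x y : α}
    (htri : ({a, x, y} : Finset α) ∈ F) (hax : ({a, x} : Finset α) ∈ F)
    (hxy : x ≠ y) (hxa : x ≠ a) (hya : y ≠ a) :
    ∀ C ⊆ ({a, x, y} : Finset α), C.card = 2 → C ∈ F := by
  have hctri : ({a, x, y} : Finset α).card = 3 := by
    rw [Finset.card_insert_of_notMem (by simp [Ne.symm hxa, Ne.symm hya]),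
      Finset.card_pair hxy]
  have hcax : ({a, x} : Finset α).card = 2 := Finset.card_pair (Ne.symm hxa)
  have hss : ({a, x} : Finset α) ⊂ {a, x, y} := by
    constructor
    · intro t ht
      simp only [Finset.mem_insert, Finset.mem_singleton] at ht ⊢
      tauto
    · intro hc
      have := hc (by simp : y ∈ ({a, x, y} : Finset α))
      simp only [Finset.mem_insert, Finset.mem_singleton] at this
      rcases this with rfl | rfl
      · exact hya rfl
      · exact hxy rfl.symm
  intro C hC hCc
  exact h1 _ htri _ hax (by omega) hss C hC (by omega)

end Structures

section Lifts

/-- Lifted content of a downstairs `AStruct` through the link-at-`x` reduction. -/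
lemma lift_A {X : Finset α} {F1 F2 : Set (Finset α)} {x : α} (hxX : x ∈ X)
    (h : AStruct (X.erase x) (Lk X x F1) (Dl X x F2)) :
    ∃ α1 ∈ X.erase x, ∃ p ∈ X.erase x, ∃ q ∈ X.erase x,
      α1 ≠ p ∧ q ≠ α1 ∧ q ≠ p ∧
      X.erase α1 ∈ F1 ∧ (X.erase x).erase p ∈ F2 ∧
      (∀ t ∈ X, t ≠ x → t ≠ p → t ≠ q → insert x ({t} : Finset α) ∈ F1) ∧
      (∀ t ∈ X, t ≠ x → t ≠ α1 → t ≠ q → ({t} : Finset α) ∈ F2) := by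
  obtain ⟨a1, h1, a2, h2, c, hc, hne, hca1, hca2, hb1, hb2, hs1, hs2⟩ := h
  refine ⟨a1, h1, a2, h2, c, hc, hne, hca1, hca2, ?_, ?_, ?_, ?_⟩
  · obtain ⟨hsub, hmem⟩ := hb1
    have : insert x ((X.erase x).erase a1) = X.erase a1 := by
      ext t
      simp only [Finset.mem_insert, Finset.mem_erase]
      constructor
      · rintro (rfl | ⟨h1', h2', h3'⟩)
        · exact ⟨Ne.symm (Finset.mem_erase.mp h1).1, hxX⟩
        · exact ⟨h1', h3'⟩
      · rintro ⟨h1', h2'⟩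
        rcases eq_or_ne t x with rfl | htx
        · exact Or.inl rfl
        · exact Or.inr ⟨h1', htx, h2'⟩
    rwa [this] at hmem
  · exact hb2.2
  · intro t htX htx htp htq
    have := hs1 t (Finset.mem_erase.mpr ⟨htx, htX⟩) htp htq
    exact this.2
  · intro t htX htx hta htq
    exact (hs2 t (Finset.mem_erase.mpr ⟨htx, htX⟩) hta htq).2

/-- Lifted content of a downstairs `BStruct` through the link-at-`x` reduction. -/
lemma lift_B {X : Finset α} {F1 F2 : Set (Finset α)}
    (h11 : PropS1 F1) (h21 : PropS2 F1) {x : α} (hxX : x ∈ X)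
    (h : BStruct (X.erase x) (Lk X x F1) (Dl X x F2)) :
    ∃ b0 ∈ X.erase x, ∃ k, 1 ≤ k ∧ k ≤ X.card - 2 ∧
      (∀ C ⊆ X.erase b0, C.card = k + 1 → C ∈ F1) ∧
      (∀ C ⊆ (X.erase x).erase b0, C.card = X.card - 1 - k → C ∈ F2) := by
  obtain ⟨b0, haX, k, hk1, hk2, hf1, hf2⟩ := h
  have hcard : (X.erase x).card = X.card - 1 := Finset.card_erase_of_mem hxX
  have hXpos : 1 ≤ X.card := Finset.card_pos.mpr ⟨x, hxX⟩
  refine ⟨b0, haX, k, hk1, by omega, ?_, ?_⟩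
  · -- star merge
    have hxV : x ∉ (X.erase x).erase b0 := fun hc =>
      (Finset.notMem_erase x X) (Finset.mem_of_mem_erase hc)
    have hstar := starMerge h11 h21 hxV hk1 (fun C hC hCc => (hf1 C hC hCc).2)
    have hins : insert x ((X.erase x).erase b0) = X.erase b0 := by
      have hax : b0 ≠ x := (Finset.mem_erase.mp haX).1
      ext t
      simp only [Finset.mem_insert, Finset.mem_erase]
      constructor
      · rintro (rfl | ⟨h1', h2', h3'⟩)
        · exact ⟨Ne.symm hax, hxX⟩
        · exact ⟨h1', h3'⟩
      · rintro ⟨h1', h2'⟩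
        rcases eq_or_ne t x with rfl | htx
        · exact Or.inl rfl
        · exact Or.inr ⟨h1', htx, h2'⟩
    rw [hins] at hstar
    exact hstar
  · intro C hC hCc
    exact (hf2 C hC (by omega)).2

end Lifts

section CaseLemmas

lemma caseB1_done {X : Finset α} {F1 F2 : Set (Finset α)}
    (h12 : PropS1 F2) (h22 : PropS2 F2)
    {a x : α} (haX : a ∈ X) (hxX : x ∈ X) (hxa : x ≠ a)
    (hbig2 : X.erase a ∈ F2) {k : ℕ} (hk1 : 1 ≤ k) (hk2 : k ≤ X.card - 2)
    (hF1 : ∀ C ⊆ X.erase a, C.card = k + 1 → C ∈ F1)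
    (hF2col : ∀ C ⊆ (X.erase x).erase a, C.card = X.card - 1 - k → C ∈ F2) :
    BStruct X F1 F2 := by
  have hm2 : 2 ≤ X.card := by
    have : ({x, a} : Finset α).card = 2 := Finset.card_pair hxa
    calc 2 = ({x, a} : Finset α).card := this.symm
      _ ≤ X.card := Finset.card_le_card (by
          intro t ht
          rcases Finset.mem_insert.mp ht with rfl | ht'
          · exact hxX
          · rw [Finset.mem_singleton.mp ht']; exact haX)
  have hUcard : (X.erase a).card = X.card - 1 := Finset.card_erase_of_mem haX
  have hcomm : (X.erase x).erase a = (X.erase a).erase x := Finset.erase_right_comm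
  have hcol' : ∀ j, X.card - 1 - k ≤ j → j < X.card - 1 →
      ∀ C ⊆ (X.erase a).erase x, C.card = j → C ∈ F2 := by
    intro j hj1 hj2
    apply fullUpTo h22 (by omega : 1 ≤ X.card - 1 - k) hj1
    intro C hC hCc
    exact hF2col C (by rwa [hcomm]) hCc
  have hanchor : ∀ C ⊆ X.erase a, C.card = (X.card - 1 - k) + k → C ∈ F2 := by
    intro C hC hCc
    have : C = X.erase a := Finset.eq_of_subset_of_card_le hC (by omega)
    rw [this]; exact hbig2
  have hdesc := descendMany h12 (by omega : 1 ≤ X.card - 1 - k) k (by omega)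
    hanchor (fun j hj1 hj2 => hcol' j hj1 (by omega))
  refine ⟨a, haX, k + 1, by omega, by omega, hF1, ?_⟩
  intro C hC hCc
  exact hdesc C hC (by omega)

/-- Content of `LiftA1`: the `(A')` facts obtained from a link-reduction at `u`,
with the big element identified as `a`. -/
def LiftA1 (X : Finset α) (F1 F2 : Set (Finset α)) (a u : α) : Prop :=
  ∃ p ∈ X.erase u, ∃ q ∈ X.erase u, p ≠ a ∧ q ≠ a ∧ q ≠ p ∧
    (X.erase u).erase p ∈ F2 ∧
    (∀ t ∈ X, t ≠ u → t ≠ p → t ≠ q → insert u ({t} : Finset α) ∈ F1) ∧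
    (∀ t ∈ X, t ≠ u → t ≠ a → t ≠ q → ({t} : Finset α) ∈ F2)

lemma key_of_dich {X : Finset α} {F1 F2 : Set (Finset α)}
    (h11 : PropS1 F1) (h21 : PropS2 F1) (h12 : PropS1 F2) (h22 : PropS2 F2)
    {a u : α} (haX : a ∈ X) (huX : u ∈ X) (hua : u ≠ a)
    (hbig2 : X.erase a ∈ F2)
    (huniq1 : ∀ b ∈ X, X.erase b ∈ F1 → b = a)
    (hdich : AStruct (X.erase u) (Lk X u F1) (Dl X u F2) ∨
      BStruct (X.erase u) (Lk X u F1) (Dl X u F2)) :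
    BStruct X F1 F2 ∨ LiftA1 X F1 F2 a u := by
  rcases hdich with hA | hB
  · right
    obtain ⟨α1, hα1, p, hp, q, hq, hα1p, hqα1, hqp, hbig1', hD, hpair, hsing⟩ := lift_A huX hA
    have hα1a : α1 = a := huniq1 α1 (Finset.mem_of_mem_erase hα1) hbig1'
    subst hα1a
    exact ⟨p, hp, q, hq, Ne.symm hα1p, hqα1, hqp, hD, hpair,
      fun t ht h1' h2' h3' => hsing t ht h1' h2' h3'⟩
  · left
    obtain ⟨b0, hb0, k, hk1, hk2, hf1, hf2⟩ := lift_B h11 h21 huX hB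
    have hb0X : b0 ∈ X := Finset.mem_of_mem_erase hb0
    have htop : X.erase b0 ∈ F1 := by
      have hcard : (X.erase b0).card = X.card - 1 := Finset.card_erase_of_mem hb0X
      apply fullUpTo h21 (by omega : 1 ≤ k + 1) (by omega : k + 1 ≤ X.card - 1) hf1
        (X.erase b0) (le_refl _)
      omega
    have hb0a : b0 = a := huniq1 b0 hb0X htop
    subst hb0a
    exact caseB1_done h12 h22 haX huX hua hbig2 hk1 hk2 hf1 hf2

lemma big_of_dich {X : Finset α} {F1 F2 : Set (Finset α)}
    (h11 : PropS1 F1) (h21 : PropS2 F1) {u : α} (huX : u ∈ X)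
    (hdich : AStruct (X.erase u) (Lk X u F1) (Dl X u F2) ∨
      BStruct (X.erase u) (Lk X u F1) (Dl X u F2)) :
    ∃ b ∈ X.erase u, X.erase b ∈ F1 := by
  rcases hdich with hA | hB
  · obtain ⟨α1, hα1, p, hp, q, hq, _, _, _, hbig1', _⟩ := lift_A huX hA
    exact ⟨α1, hα1, hbig1'⟩
  · obtain ⟨b0, hb0, k, hk1, hk2, hf1, hf2⟩ := lift_B h11 h21 huX hB
    have hb0X : b0 ∈ X := Finset.mem_of_mem_erase hb0
    refine ⟨b0, hb0, ?_⟩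
    have hcard : (X.erase b0).card = X.card - 1 := Finset.card_erase_of_mem hb0X
    apply fullUpTo h21 (by omega : 1 ≤ k + 1) (by omega : k + 1 ≤ X.card - 1) hf1
      (X.erase b0) (le_refl _)
    omega

/-- In the case of distinct pivots, (A') is impossible and (B') produces the F2 column top. -/
lemma colTop_of_dich {X : Finset α} {F1 F2 : Set (Finset α)}
    (h11 : PropS1 F1) (h21 : PropS2 F1) (h22 : PropS2 F2)
    {a u : α} (haX : a ∈ X) (huX : u ∈ X) (hua : u ≠ a)
    (ha1 : ({a} : Finset α) ∈ F1) (hu1 : ({u} : Finset α) ∉ F1)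
    (huniq1 : ∀ b ∈ X, X.erase b ∈ F1 → b = a)
    (hdich : AStruct (X.erase u) (Lk X u F1) (Dl X u F2) ∨
      BStruct (X.erase u) (Lk X u F1) (Dl X u F2)) :
    (X.erase u).erase a ∈ F2 := by
  rcases hdich with hA | hB
  · exfalso
    obtain ⟨α1, hα1, p, hp, q, hq, hα1p, hqα1, hqp, hbig1', hD, hpair, hsing⟩ := lift_A huX hA
    have hα1a : α1 = a := huniq1 α1 (Finset.mem_of_mem_erase hα1) hbig1'
    subst hα1a
    have hpa : ({α1, u} : Finset α) ∈ F1 := by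
      have := hpair α1 haX (Ne.symm hua) hα1p (fun hc => hqα1 hc.symm)
      rwa [Finset.pair_comm u α1] at this
    exact hu1 (sub_clash h11 ha1 hpa (Ne.symm hua))
  · obtain ⟨b0, hb0, k, hk1, hk2, hf1, hf2⟩ := lift_B h11 h21 huX hB
    have hb0X : b0 ∈ X := Finset.mem_of_mem_erase hb0
    have htop : X.erase b0 ∈ F1 := by
      have hcard : (X.erase b0).card = X.card - 1 := Finset.card_erase_of_mem hb0X
      apply fullUpTo h21 (by omega : 1 ≤ k + 1) (by omega : k + 1 ≤ X.card - 1) hf1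
        (X.erase b0) (le_refl _)
      omega
    have hb0a : b0 = a := huniq1 b0 hb0X htop
    subst hb0a
    have hmcard : ((X.erase u).erase b0).card = X.card - 2 := by
      rw [Finset.card_erase_of_mem (Finset.mem_erase.mpr ⟨Ne.symm hua, haX⟩),
        Finset.card_erase_of_mem huX]
      have : 2 ≤ X.card := by
        have h2' : ({u, b0} : Finset α).card = 2 := Finset.card_pair hua
        calc 2 = ({u, b0} : Finset α).card := h2'.symm
          _ ≤ X.card := Finset.card_le_card (by
              intro t ht
              rcases Finset.mem_insert.mp ht with rfl | ht'
              · exact huX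
              · rw [Finset.mem_singleton.mp ht']; exact haX)
      omega
    apply fullUpTo h22 (by omega : 1 ≤ X.card - 1 - k) (by omega : X.card - 1 - k ≤ X.card - 2)
      hf2 ((X.erase u).erase b0) (le_refl _)
    omega

lemma blow4 {F : Set (Finset α)} (h1' : PropS2 F) {X : Finset α} {a s t : α}
    (hX4 : X.card = 4) (hsX : s ∈ X) (htX : t ∈ X) (haX : a ∈ X)
    (hst : s ≠ t) (hsa : s ≠ a) (hta : t ≠ a)
    (hbig : X.erase a ∈ F) (has : ({a, s} : Finset α) ∈ F)
    (hat : ({a, t} : Finset α) ∈ F) (hXF : X ∉ F) : False := by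
  have htri : ({a, s, t} : Finset α) ∈ F := tri_mem h1' has hat hst hsa hta
  have hctri : ({a, s, t} : Finset α).card = 3 := by
    rw [Finset.card_insert_of_notMem (by simp [Ne.symm hsa, Ne.symm hta]),
      Finset.card_pair hst]
  have hcbig : (X.erase a).card = 3 := by rw [Finset.card_erase_of_mem haX, hX4]
  have hint : ({a, s, t} : Finset α) ∩ X.erase a = {s, t} := by
    ext w
    simp only [Finset.mem_inter, Finset.mem_insert, Finset.mem_singleton, Finset.mem_erase]
    constructor
    · rintro ⟨rfl | rfl | rfl, hw1, hw2⟩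
      · exact absurd rfl hw1
      · exact Or.inl rfl
      · exact Or.inr rfl
    · rintro (rfl | rfl)
      · exact ⟨Or.inr (Or.inl rfl), hsa, hsX⟩
      · exact ⟨Or.inr (Or.inr rfl), hta, htX⟩
  have hicard : (({a, s, t} : Finset α) ∩ X.erase a).card = ({a, s, t} : Finset α).card - 1 := by
    rw [hint, Finset.card_pair hst, hctri]
  have huni : ({a, s, t} : Finset α) ∪ X.erase a = X := by
    apply Finset.Subset.antisymm
    · intro w hw
      rcases Finset.mem_union.mp hw with hw' | hw'
      · rcases Finset.mem_insert.mp hw' with rfl | hw''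
        · exact haX
        · rcases Finset.mem_insert.mp hw'' with rfl | hw'''
          · exact hsX
          · rw [Finset.mem_singleton.mp hw''']; exact htX
      · exact Finset.mem_of_mem_erase hw'
    · intro w hw
      rcases eq_or_ne w a with rfl | hwa
      · exact Finset.mem_union_left _ (by simp)
      · exact Finset.mem_union_right _ (Finset.mem_erase.mpr ⟨hwa, hw⟩)
  have := h1' _ htri _ hbig (by rw [hctri, hcbig]) hicard
  rw [huni] at this
  exact hXF this

end CaseLemmas

section Case66

lemma case66 {X : Finset α} {F1 F2 : Set (Finset α)}
    (h11 : PropS1 F1) (h21 : PropS2 F1) (h12 : PropS1 F2) (h22 : PropS2 F2)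
    (hX1 : X ∉ F1) (hX2 : X ∉ F2)
    {a x y : α} (haX : a ∈ X) (hxX : x ∈ X) (hyX : y ∈ X)
    (hxa : x ≠ a) (hya : y ≠ a)
    (hbig1 : X.erase a ∈ F1) (hbig2 : X.erase a ∈ F2)
    (hx1 : ({x} : Finset α) ∉ F1) (hy2 : ({y} : Finset α) ∉ F2)
    (key1 : ∀ u ∈ X, ({u} : Finset α) ∉ F1 → u ≠ a →
      BStruct X F1 F2 ∨ LiftA1 X F1 F2 a u)
    (key2 : ∀ u ∈ X, ({u} : Finset α) ∉ F2 → u ≠ a →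
      BStruct X F1 F2 ∨ LiftA1 X F2 F1 a u) :
    BStruct X F1 F2 := by
  rcases key1 x hxX hx1 hxa with hB | hAx
  · exact hB
  obtain ⟨p, hpXx, q, hqXx, hpa, hqa, hqp, hD, hpair1, hT2x⟩ := hAx
  rcases key2 y hyX hy2 hya with hB | hAy
  · exact hB
  obtain ⟨p', hp'Xy, q', hq'Xy, hp'a, hq'a, hq'p', hE, hpair2, hT1y⟩ := hAy
  have hpX : p ∈ X := Finset.mem_of_mem_erase hpXx
  have hpx : p ≠ x := (Finset.mem_erase.mp hpXx).1
  have hqX : q ∈ X := Finset.mem_of_mem_erase hqXx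
  have hqx : q ≠ x := (Finset.mem_erase.mp hqXx).1
  have hp'X : p' ∈ X := Finset.mem_of_mem_erase hp'Xy
  have hp'y : p' ≠ y := (Finset.mem_erase.mp hp'Xy).1
  have hq'X : q' ∈ X := Finset.mem_of_mem_erase hq'Xy
  have hq'y : q' ≠ y := (Finset.mem_erase.mp hq'Xy).1
  -- singleton bounds
  have hT1bound : ∀ t ∈ X, ({t} : Finset α) ∈ F1 → t = p ∨ t = q := by
    intro t htX ht1
    by_contra hc
    push_neg at hc
    have htx : t ≠ x := fun h => hx1 (h ▸ ht1)
    have hp1 := hpair1 t htX htx hc.1 hc.2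
    rw [Finset.pair_comm x t] at hp1
    exact hx1 (sub_clash h11 ht1 hp1 htx)
  have hT2bound : ∀ t ∈ X, ({t} : Finset α) ∈ F2 → t = p' ∨ t = q' := by
    intro t htX ht2
    by_contra hc
    push_neg at hc
    have hty : t ≠ y := fun h => hy2 (h ▸ ht2)
    have hp2 := hpair2 t htX hty hc.1 hc.2
    rw [Finset.pair_comm y t] at hp2
    exact hy2 (sub_clash h12 ht2 hp2 hty)
  -- small singleton facts
  have hpF2 : ({p} : Finset α) ∈ F2 := hT2x p hpX hpx hpa (Ne.symm hqp)
  have hp'F1 : ({p'} : Finset α) ∈ F1 := hT1y p' hp'X hp'y hp'a (Ne.symm hq'p')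
  have hxa1 : ({x, a} : Finset α) ∈ F1 :=
    hpair1 a haX (Ne.symm hxa) (Ne.symm hpa) (Ne.symm hqa)
  have hya2 : ({y, a} : Finset α) ∈ F2 :=
    hpair2 a haX (Ne.symm hya) (Ne.symm hp'a) (Ne.symm hq'a)
  have hyp : y ≠ p := fun h => hy2 (h ▸ hpF2)
  have hxp' : x ≠ p' := fun h => hx1 (h ▸ hp'F1)
  -- cardinalities
  have hquad : ({x, a, p, q} : Finset α).card = 4 := by
    rw [Finset.card_insert_of_notMem (by simp [hxa, Ne.symm hpx, Ne.symm hqx]),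
      Finset.card_insert_of_notMem (by simp [Ne.symm hpa, Ne.symm hqa]),
      Finset.card_pair (Ne.symm hqp)]
  have hm4 : 4 ≤ X.card := by
    have hsub : ({x, a, p, q} : Finset α) ⊆ X := by
      intro t ht
      simp only [Finset.mem_insert, Finset.mem_singleton] at ht
      rcases ht with rfl | rfl | rfl | rfl
      · exact hxX
      · exact haX
      · exact hpX
      · exact hqX
    calc 4 = ({x, a, p, q} : Finset α).card := hquad.symm
      _ ≤ X.card := Finset.card_le_card hsub
  have haXx : a ∈ X.erase x := Finset.mem_erase.mpr ⟨Ne.symm hxa, haX⟩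
  have hqXxa : q ∈ (X.erase x).erase a := Finset.mem_erase.mpr ⟨hqa, hqXx⟩
  have hWsub : (((X.erase x).erase a).erase q : Finset α) ⊆ {p', q'} := by
    intro t ht
    have htq : t ≠ q := (Finset.mem_erase.mp ht).1
    have hta : t ≠ a := (Finset.mem_erase.mp (Finset.mem_of_mem_erase ht)).1
    have htx : t ≠ x :=
      (Finset.mem_erase.mp (Finset.mem_of_mem_erase (Finset.mem_of_mem_erase ht))).1
    have htX : t ∈ X :=
      Finset.mem_of_mem_erase (Finset.mem_of_mem_erase (Finset.mem_of_mem_erase ht))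
    have ht2 : ({t} : Finset α) ∈ F2 := hT2x t htX htx hta htq
    rcases hT2bound t htX ht2 with rfl | rfl
    · simp
    · simp
  have hWcard : (((X.erase x).erase a).erase q).card = X.card - 3 := by
    rw [Finset.card_erase_of_mem hqXxa, Finset.card_erase_of_mem haXx,
      Finset.card_erase_of_mem hxX]
    omega
  have hm5 : X.card ≤ 5 := by
    have h1' := Finset.card_le_card hWsub
    have h2' : ({p', q'} : Finset α).card ≤ 2 :=
      le_trans (Finset.card_insert_le _ _) (by simp)
    omega
  have hopt : ∀ t ∈ X, X.card = 4 → t = x ∨ t = a ∨ t = p ∨ t = q := by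
    intro t htX h4
    by_contra hc
    push_neg at hc
    obtain ⟨h1', h2', h3', h4'⟩ := hc
    have hins : insert t ({x, a, p, q} : Finset α) ⊆ X := by
      intro s hs
      rcases Finset.mem_insert.mp hs with rfl | hs'
      · exact htX
      · simp only [Finset.mem_insert, Finset.mem_singleton] at hs'
        rcases hs' with rfl | rfl | rfl | rfl
        · exact hxX
        · exact haX
        · exact hpX
        · exact hqX
    have hcard5 : (insert t ({x, a, p, q} : Finset α)).card = 5 := by
      rw [Finset.card_insert_of_notMem (by simp [h1', h2', h3', h4']), hquad]
    have := Finset.card_le_card hins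
    omega
  rcases (by omega : X.card = 4 ∨ X.card = 5) with h4 | h5
  · -- m = 4
    have key_blow : ∀ s : α, s ∈ X → s ≠ x → s ≠ a →
        ({a, s} : Finset α) ∈ F1 → False := by
      intro s hsX hsx hsa has
      have hax' : ({a, x} : Finset α) ∈ F1 := by rwa [Finset.pair_comm] at hxa1
      exact blow4 h21 h4 hxX hsX haX (fun h => hsx h.symm) hxa hsa hbig1 hax' has hX1
    have hyopt : y = x ∨ y = q := by
      rcases hopt y hyX h4 with h' | h' | h' | h'
      · exact Or.inl h'
      · exact absurd h' hya
      · exact absurd h' hyp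
      · exact Or.inr h'
    rcases hyopt with hyx | hyq
    · -- y = x
      rw [hyx] at hp'Xy hq'Xy hE hT1y hy2
      have hp'x : p' ≠ x := (Finset.mem_erase.mp hp'Xy).1
      have hq'x : q' ≠ x := (Finset.mem_erase.mp hq'Xy).1
      have hp'opt : p' = p ∨ p' = q := by
        rcases hopt p' hp'X h4 with h' | h' | h' | h'
        · exact absurd h' hp'x
        · exact absurd h' hp'a
        · exact Or.inl h'
        · exact Or.inr h'
      have hq'opt : q' = p ∨ q' = q := by
        rcases hopt q' hq'X h4 with h' | h' | h' | h'
        · exact absurd h' hq'x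
        · exact absurd h' hq'a
        · exact Or.inl h'
        · exact Or.inr h'
      rcases hp'opt with hp'p | hp'q
      · -- p' = p, so q' = q
        have hEset : ({a, q} : Finset α) = (X.erase x).erase p' := by
          apply Finset.eq_of_subset_of_card_le
          · intro t ht
            rcases Finset.mem_insert.mp ht with rfl | ht'
            · exact Finset.mem_erase.mpr ⟨Ne.symm hp'a, haXx⟩
            · rw [Finset.mem_singleton.mp ht']
              exact Finset.mem_erase.mpr ⟨hp'p ▸ (fun h => hqp h), hqXx⟩
          · rw [Finset.card_erase_of_mem (Finset.mem_erase.mpr ⟨hp'x, hp'X⟩),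
              Finset.card_erase_of_mem hxX, Finset.card_pair (Ne.symm hqa), h4]
        have hEm : ({a, q} : Finset α) ∈ F1 := by rw [hEset]; exact hE
        exact (key_blow q hqX hqx hqa hEm).elim
      · -- p' = q, so q' = p
        have hq'p : q' = p := by
          rcases hq'opt with h' | h'
          · exact h'
          · exact absurd (h'.trans hp'q.symm) hq'p'
        have hEset : ({a, p} : Finset α) = (X.erase x).erase p' := by
          apply Finset.eq_of_subset_of_card_le
          · intro t ht
            rcases Finset.mem_insert.mp ht with rfl | ht'
            · exact Finset.mem_erase.mpr ⟨Ne.symm hp'a, haXx⟩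
            · rw [Finset.mem_singleton.mp ht']
              exact Finset.mem_erase.mpr ⟨hp'q ▸ (fun h => hqp h.symm), hpXx⟩
          · rw [Finset.card_erase_of_mem (Finset.mem_erase.mpr ⟨hp'x, hp'X⟩),
              Finset.card_erase_of_mem hxX, Finset.card_pair (Ne.symm hpa), h4]
        have hEm : ({a, p} : Finset α) ∈ F1 := by rw [hEset]; exact hE
        exact (key_blow p hpX hpx hpa hEm).elim
    · -- y = q
      rw [hyq] at hp'Xy hq'Xy hE hpair2 hT1y hy2
      have hp'q : p' ≠ q := (Finset.mem_erase.mp hp'Xy).1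
      have hq'q : q' ≠ q := (Finset.mem_erase.mp hq'Xy).1
      have hp'p : p' = p := by
        rcases hopt p' hp'X h4 with h' | h' | h' | h'
        · exact absurd h' (fun hh => hxp' hh.symm)
        · exact absurd h' hp'a
        · exact h'
        · exact absurd h' hp'q
      have hq'x : q' = x := by
        rcases hopt q' hq'X h4 with h' | h' | h' | h'
        · exact h'
        · exact absurd h' hq'a
        · exact absurd (h'.trans hp'p.symm) hq'p'
        · exact absurd h' hq'q
      by_cases hq1 : ({q} : Finset α) ∈ F1
      · have hpF1 : ({p} : Finset α) ∈ F1 :=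
          hT1y p hpX (fun h => hqp h.symm) hpa (fun h => hpx (h.trans hq'x))
        have hpq1 : ({p, q} : Finset α) ∈ F1 := pair_mem h21 hpF1 hq1 (Ne.symm hqp)
        have hss : ({p, q} : Finset α) ⊂ X.erase a := by
          constructor
          · intro t ht
            rcases Finset.mem_insert.mp ht with rfl | ht'
            · exact Finset.mem_erase.mpr ⟨hpa, hpX⟩
            · rw [Finset.mem_singleton.mp ht']
              exact Finset.mem_erase.mpr ⟨hqa, hqX⟩
          · intro hcsub
            have := hcsub (Finset.mem_erase.mpr ⟨hxa, hxX⟩)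
            simp only [Finset.mem_insert, Finset.mem_singleton] at this
            rcases this with rfl | rfl
            · exact hpx rfl
            · exact hqx rfl
        have hcard32 : (X.erase a).card = ({p, q} : Finset α).card + 1 := by
          rw [Finset.card_erase_of_mem haX, Finset.card_pair (Ne.symm hqp), h4]
        have hall2 := h11 _ hbig1 _ hpq1 hcard32 hss
        have hxpF1 : ({x, p} : Finset α) ∈ F1 := hall2 {x, p}
          (by
            intro t ht
            rcases Finset.mem_insert.mp ht with rfl | ht'
            · exact Finset.mem_erase.mpr ⟨hxa, hxX⟩
            · rw [Finset.mem_singleton.mp ht']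
              exact Finset.mem_erase.mpr ⟨hpa, hpX⟩)
          (by rw [Finset.card_pair (Ne.symm hpx), Finset.card_pair (Ne.symm hqp)])
        rw [Finset.pair_comm] at hxpF1
        exact absurd (sub_clash h11 hpF1 hxpF1 hpx) hx1
      · rcases key1 q hqX hq1 hqa with hB | hAq
        · exact hB
        · obtain ⟨p2, _, q2, _, hp2a, hq2a, _, _, hpair1q, _⟩ := hAq
          have hqa1 : insert q ({a} : Finset α) ∈ F1 :=
            hpair1q a haX (Ne.symm hqa) (Ne.symm hp2a) (Ne.symm hq2a)
          rw [Finset.pair_comm] at hqa1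
          have hax' : ({a, x} : Finset α) ∈ F1 := by rwa [Finset.pair_comm] at hxa1
          exact (blow4 h21 h4 hxX hqX haX (fun h => hqx h.symm) hxa hqa hbig1
            hax' hqa1 hX1).elim
  · -- m = 5
    have hr : ∃ r ∈ X, r ≠ x ∧ r ≠ a ∧ r ≠ p ∧ r ≠ q := by
      by_contra hc
      push_neg at hc
      have hXsub : X ⊆ ({x, a, p, q} : Finset α) := by
        intro t htX
        by_contra htq
        simp only [Finset.mem_insert, Finset.mem_singleton] at htq
        push_neg at htq
        obtain ⟨h1', h2', h3', h4'⟩ := htq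
        exact h4' (hc t htX h1' h2' h3')
      have := Finset.card_le_card hXsub
      omega
    obtain ⟨r, hrX, hrx, hra, hrp, hrq⟩ := hr
    have hrF2 : ({r} : Finset α) ∈ F2 := hT2x r hrX hrx hra hrq
    have hyr : y ≠ r := fun h => hy2 (h ▸ hrF2)
    rcases hT2bound p hpX hpF2 with hpp' | hpq' <;>
      rcases hT2bound r hrX hrF2 with hrp' | hrq'
    · -- p = p' and r = p': contradiction
      exact absurd (hpp'.trans hrp'.symm) (fun h => hrp h.symm)
    · -- p = p', r = q' : main case
      have hyx : y = x := by
        by_contra hyx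
        exact hx1 (hT1y x hxX (fun h => hyx h.symm) hxa
          (fun h => hrx (hrq'.trans h.symm)))
      rw [hyx] at hp'Xy hq'Xy hE hT1y hy2
      have hxr1 : ({x, r} : Finset α) ∈ F1 := hpair1 r hrX hrx hrp hrq
      have htri : ({x, a, r} : Finset α) ∈ F1 :=
        tri_mem h21 hxa1 hxr1 (fun h => hra h.symm) (Ne.symm hxa) hrx
      have har1 : ({a, r} : Finset α) ∈ F1 := by
        refine pairs_of_tri h11 htri hxa1 (fun h => hra h.symm) (Ne.symm hxa) hrx
          {a, r} ?_ (Finset.card_pair (fun h => hra h.symm))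
        intro t ht
        rcases Finset.mem_insert.mp ht with rfl | ht'
        · simp
        · rw [Finset.mem_singleton.mp ht']; simp
      have hEset : ({a, q, r} : Finset α) = (X.erase x).erase p' := by
        apply Finset.eq_of_subset_of_card_le
        · intro t ht
          have hp'p : p' = p := hpp'.symm
          rcases Finset.mem_insert.mp ht with rfl | ht'
          · exact Finset.mem_erase.mpr ⟨Ne.symm hp'a, haXx⟩
          · rcases Finset.mem_insert.mp ht' with rfl | ht''
            · exact Finset.mem_erase.mpr ⟨hp'p ▸ (fun h => hqp h), hqXx⟩
            · rw [Finset.mem_singleton.mp ht'']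
              exact Finset.mem_erase.mpr ⟨hp'p ▸ hrp,
                Finset.mem_erase.mpr ⟨hrx, hrX⟩⟩
        · have hp'x : p' ≠ x := (Finset.mem_erase.mp hp'Xy).1
          have hcaqr : ({a, q, r} : Finset α).card = 3 := by
            rw [Finset.card_insert_of_notMem
                (by simp [Ne.symm hqa, Ne.symm hra]),
              Finset.card_pair (fun h => hrq h.symm)]
          rw [Finset.card_erase_of_mem (Finset.mem_erase.mpr ⟨hp'x, hp'X⟩),
            Finset.card_erase_of_mem hxX, hcaqr, h5]
      have hEm : ({a, q, r} : Finset α) ∈ F1 := by rw [hEset]; exact hE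
      have hqr1 : ({q, r} : Finset α) ∈ F1 := by
        have hssqr : ({a, r} : Finset α) ⊂ {a, q, r} := by
          constructor
          · intro t ht
            rcases Finset.mem_insert.mp ht with rfl | ht'
            · simp
            · rw [Finset.mem_singleton.mp ht']; simp
          · intro hcsub
            have := hcsub (by simp : q ∈ ({a, q, r} : Finset α))
            simp only [Finset.mem_insert, Finset.mem_singleton] at this
            rcases this with rfl | rfl
            · exact hqa rfl
            · exact hrq rfl.symm
        have hc32 : ({a, q, r} : Finset α).card = ({a, r} : Finset α).card + 1 := by
          rw [Finset.card_insert_of_notMem (by simp [Ne.symm hqa, Ne.symm hra]),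
            Finset.card_pair (fun h => hrq h.symm),
            Finset.card_pair (fun h => hra h.symm)]
        refine h11 _ hEm _ har1 hc32 hssqr {q, r} ?_
          (by rw [Finset.card_pair (fun h => hrq h.symm),
            Finset.card_pair (fun h => hra h.symm)])
        intro t ht
        rcases Finset.mem_insert.mp ht with rfl | ht'
        · simp
        · rw [Finset.mem_singleton.mp ht']; simp
      have hqF1 : ({q} : Finset α) ∈ F1 :=
        hT1y q hqX hqx hqa (fun h => hrq (hrq'.trans h.symm))
      have hrF1 : ({r} : Finset α) ∈ F1 :=
        sub_clash h11 hqF1 hqr1 (fun h => hrq h.symm)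
      rcases hT1bound r hrX hrF1 with h' | h'
      · exact absurd h' hrp
      · exact absurd h' hrq
    · -- p = q', r = p' : immediate
      have hr1 : ({r} : Finset α) ∈ F1 :=
        hT1y r hrX (fun h => hyr h.symm) hra (fun h => hrp (h.trans hpq'.symm))
      rcases hT1bound r hrX hr1 with h' | h'
      · exact absurd h' hrp
      · exact absurd h' hrq
    · -- p = q' and r = q': contradiction
      exact absurd (hpq'.trans hrq'.symm) (fun h => hrp h.symm)

end Case66

section MainLemma

lemma Iic_bot_image {m : ℕ} (e : Fin m → α) {i : Fin m} (h : (i : ℕ) = 0) :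
    (Finset.Iic i).image e = {e i} := by
  ext t
  simp only [Finset.mem_image, Finset.mem_Iic, Finset.mem_singleton]
  constructor
  · rintro ⟨j, hj, rfl⟩
    have hle : (j : ℕ) ≤ (i : ℕ) := hj
    have : j = i := Fin.ext (by omega)
    rw [this]
  · rintro rfl
    exact ⟨i, le_rfl, rfl⟩

lemma Ici_top_image {m : ℕ} (e : Fin m → α) {i : Fin m} (h : (i : ℕ) = m - 1) :
    (Finset.Ici i).image e = {e i} := by
  ext t
  simp only [Finset.mem_image, Finset.mem_Ici, Finset.mem_singleton]
  constructor
  · rintro ⟨j, hj, rfl⟩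
    have hjlt : (j : ℕ) < m := j.isLt
    have hle : (i : ℕ) ≤ (j : ℕ) := hj
    have : j = i := Fin.ext (by omega)
    rw [this]
  · rintro rfl
    exact ⟨i, le_rfl, rfl⟩

lemma Ici_bot_image {m : ℕ} (e : Fin m → α) {i : Fin m} (h : (i : ℕ) = 0) :
    (Finset.Ici i).image e = Finset.univ.image e := by
  ext t
  simp only [Finset.mem_image, Finset.mem_Ici, Finset.mem_univ, true_and]
  constructor
  · rintro ⟨j, _, rfl⟩; exact ⟨j, rfl⟩
  · rintro ⟨j, rfl⟩
    exact ⟨j, by rw [Fin.le_def]; omega, rfl⟩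

lemma Iic_top_image {m : ℕ} (e : Fin m → α) {i : Fin m} (h : (i : ℕ) = m - 1) :
    (Finset.Iic i).image e = Finset.univ.image e := by
  ext t
  simp only [Finset.mem_image, Finset.mem_Iic, Finset.mem_univ, true_and]
  constructor
  · rintro ⟨j, _, rfl⟩; exact ⟨j, rfl⟩
  · rintro ⟨j, rfl⟩
    refine ⟨j, by rw [Fin.le_def]; have := j.isLt; omega, rfl⟩

end MainLemma

theorem lemD : ∀ n : ℕ, ∀ (X : Finset α) (F1 F2 : Set (Finset α)),
    X.card = n → 2 ≤ n →
    PropS1 F1 → PropS2 F1 → PropS1 F2 → PropS2 F2 →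
    X ∉ F1 → X ∉ F2 → OrderConsistent X F1 F2 →
    AStruct X F1 F2 ∨ BStruct X F1 F2 := by
  intro n
  induction n using Nat.strong_induction_on with
  | _ n IH =>
  intro X F1 F2 hXn hn h11 h21 h12 h22 hX1 hX2 hoc
  rcases eq_or_lt_of_le hn with hn2 | hn3
  · -- base case : n = 2
    right
    obtain ⟨u, v, huv, hXuv⟩ := Finset.card_eq_two.mp (by omega : X.card = 2)
    have hc2 : X.card = 2 := by omega
    have hmem : ∀ t : α, t ∈ X ↔ t = u ∨ t = v := by
      intro t; rw [hXuv]; simp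
    -- first ordering: u then v
    have d1 : ({u} : Finset α) ∈ F1 ∨ ({v} : Finset α) ∈ F2 := by
      set e : Fin X.card → α := fun i => if (i : ℕ) = 0 then u else v with hedef
      have heinj : Function.Injective e := by
        intro i j hij
        simp only [hedef] at hij
        by_cases hi : (i : ℕ) = 0 <;> by_cases hj : (j : ℕ) = 0 <;>
          simp [hi, hj] at hij ⊢
        · exact Fin.ext (by omega)
        · exact absurd hij huv
        · exact absurd hij.symm huv
        · exact Fin.ext (by have := i.isLt; have := j.isLt; omega)
      have himg : Finset.univ.image e = X := by
        apply Finset.Subset.antisymm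
        · intro t ht
          obtain ⟨j, _, rfl⟩ := Finset.mem_image.mp ht
          by_cases hj : (j : ℕ) = 0 <;> simp [hedef, hj, hmem]
        · intro t ht
          rcases (hmem t).mp ht with rfl | rfl
          · exact Finset.mem_image.mpr ⟨⟨0, by omega⟩, Finset.mem_univ _, by simp [hedef]⟩
          · exact Finset.mem_image.mpr ⟨⟨1, by omega⟩, Finset.mem_univ _, by simp [hedef]⟩
      obtain ⟨i, hi⟩ := hoc e heinj himg
      have hiopt : (i : ℕ) = 0 ∨ (i : ℕ) = 1 := by have := i.isLt; omega
      rcases hiopt with h0 | h1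
      · rcases hi with hi | hi
        · rw [Iic_bot_image e h0] at hi
          left; simpa [hedef, h0] using hi
        · rw [Ici_bot_image e h0, himg] at hi
          exact absurd hi hX2
      · rcases hi with hi | hi
        · rw [Iic_top_image e (by omega), himg] at hi
          exact absurd hi hX1
        · rw [Ici_top_image e (by omega)] at hi
          right; simpa [hedef, h1] using hi
    -- second ordering: v then u
    have d2 : ({v} : Finset α) ∈ F1 ∨ ({u} : Finset α) ∈ F2 := by
      set e : Fin X.card → α := fun i => if (i : ℕ) = 0 then v else u with hedef
      have heinj : Function.Injective e := by
        intro i j hij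
        simp only [hedef] at hij
        by_cases hi : (i : ℕ) = 0 <;> by_cases hj : (j : ℕ) = 0 <;>
          simp [hi, hj] at hij ⊢
        · exact Fin.ext (by omega)
        · exact absurd hij.symm huv
        · exact absurd hij huv
        · exact Fin.ext (by have := i.isLt; have := j.isLt; omega)
      have himg : Finset.univ.image e = X := by
        apply Finset.Subset.antisymm
        · intro t ht
          obtain ⟨j, _, rfl⟩ := Finset.mem_image.mp ht
          by_cases hj : (j : ℕ) = 0 <;> simp [hedef, hj, hmem]
        · intro t ht
          rcases (hmem t).mp ht with rfl | rfl
          · exact Finset.mem_image.mpr ⟨⟨1, by omega⟩, Finset.mem_univ _, by simp [hedef]⟩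
          · exact Finset.mem_image.mpr ⟨⟨0, by omega⟩, Finset.mem_univ _, by simp [hedef]⟩
      obtain ⟨i, hi⟩ := hoc e heinj himg
      have hiopt : (i : ℕ) = 0 ∨ (i : ℕ) = 1 := by have := i.isLt; omega
      rcases hiopt with h0 | h1
      · rcases hi with hi | hi
        · rw [Iic_bot_image e h0] at hi
          left; simpa [hedef, h0] using hi
        · rw [Ici_bot_image e h0, himg] at hi
          exact absurd hi hX2
      · rcases hi with hi | hi
        · rw [Iic_top_image e (by omega), himg] at hi
          exact absurd hi hX1
        · rw [Ici_top_image e (by omega)] at hi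
          right; simpa [hedef, h1] using hi
    have husub : ({u} : Finset α) ⊆ X.erase v := by
      intro t ht
      rw [Finset.mem_singleton.mp ht]
      exact Finset.mem_erase.mpr ⟨huv, by rw [hmem]; exact Or.inl rfl⟩
    have hvsub : ({v} : Finset α) ⊆ X.erase u := by
      intro t ht
      rw [Finset.mem_singleton.mp ht]
      exact Finset.mem_erase.mpr ⟨Ne.symm huv, by rw [hmem]; exact Or.inr rfl⟩
    have herase_v : X.erase v = {u} := by
      apply (Finset.eq_of_subset_of_card_le husub _).symm
      rw [Finset.card_erase_of_mem (by rw [hmem]; exact Or.inr rfl), hc2]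
      simp
    have herase_u : X.erase u = {v} := by
      apply (Finset.eq_of_subset_of_card_le hvsub _).symm
      rw [Finset.card_erase_of_mem (by rw [hmem]; exact Or.inl rfl), hc2]
      simp
    have mkB : ∀ s : α, s ∈ X → ({s} : Finset α) ∈ F1 → ({s} : Finset α) ∈ F2 →
        ∀ b : α, b ∈ X → X.erase b = {s} → BStruct X F1 F2 := by
      intro s hsX hs1 hs2 b hbX hbe
      refine ⟨b, hbX, 1, le_rfl, by omega, ?_, ?_⟩
      · intro C hC hCc
        have : C = {s} := by
          apply Finset.eq_of_subset_of_card_le (hbe ▸ hC)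
          simp only [Finset.card_singleton, hCc]
          omega
        rw [this]; exact hs1
      · intro C hC hCc
        have : C = {s} := by
          apply Finset.eq_of_subset_of_card_le (hbe ▸ hC)
          simp only [Finset.card_singleton, hCc]
          omega
        rw [this]; exact hs2
    rcases d1 with hu1 | hv2 <;> rcases d2 with hv1 | hu2
    · exfalso
      have := pair_mem h21 hu1 hv1 huv
      rw [← hXuv] at this
      exact hX1 this
    · exact mkB u (by rw [hmem]; exact Or.inl rfl) hu1 hu2 v
        (by rw [hmem]; exact Or.inr rfl) herase_v
    · exact mkB v (by rw [hmem]; exact Or.inr rfl) hv1 hv2 u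
        (by rw [hmem]; exact Or.inl rfl) herase_u
    · exfalso
      have := pair_mem h22 hu2 hv2 huv
      rw [← hXuv] at this
      exact hX2 this
  · -- inductive step : n ≥ 3
    have hn3' : 3 ≤ n := hn3
    have hXne : X.Nonempty := Finset.card_pos.mp (by omega)
    have mkdich : ∀ u ∈ X, ({u} : Finset α) ∉ F1 → X.erase u ∉ F2 →
        AStruct (X.erase u) (Lk X u F1) (Dl X u F2) ∨
          BStruct (X.erase u) (Lk X u F1) (Dl X u F2) := by
      intro u huX hu1 hu2
      have hocr := red_oc huX hu1 hX2 hoc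
      have hcard' : (X.erase u).card = n - 1 := by
        rw [Finset.card_erase_of_mem huX, hXn]
      apply IH (n - 1) (by omega) _ _ _ hcard' (by omega)
        (Lk_propS1 h11) (Lk_propS2 h21) (Dl_propS1 h12) (Dl_propS2 h22) ?_ ?_ hocr
      · rintro ⟨-, hmem⟩
        rw [Finset.insert_erase huX] at hmem
        exact hX1 hmem
      · rintro ⟨-, hmem⟩
        exact hu2 hmem
    have mkdich2 : ∀ u ∈ X, ({u} : Finset α) ∉ F2 → X.erase u ∉ F1 →
        AStruct (X.erase u) (Lk X u F2) (Dl X u F1) ∨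
          BStruct (X.erase u) (Lk X u F2) (Dl X u F1) := by
      intro u huX hu2 hu1
      have hocr := red_oc huX hu2 hX1 (oc_swap hoc)
      have hcard' : (X.erase u).card = n - 1 := by
        rw [Finset.card_erase_of_mem huX, hXn]
      apply IH (n - 1) (by omega) _ _ _ hcard' (by omega)
        (Lk_propS1 h12) (Lk_propS2 h22) (Dl_propS1 h11) (Dl_propS2 h21) ?_ ?_ hocr
      · rintro ⟨-, hmem⟩
        rw [Finset.insert_erase huX] at hmem
        exact hX2 hmem
      · rintro ⟨-, hmem⟩
        exact hu1 hmem
    by_cases hD1 : ∀ u ∈ X, ({u} : Finset α) ∉ F1 → X.erase u ∈ F2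
    · right
      obtain ⟨z0, hz0X, hz01⟩ := exists_not_single h21 hX1 hXne
      have hsing1 : ∀ t ∈ X, t ≠ z0 → ({t} : Finset α) ∈ F1 := by
        intro t htX htz
        by_contra hc
        exact hX2 (two_bigs h22 htX hz0X htz (hD1 t htX hc) (hD1 z0 hz0X hz01))
      refine ⟨z0, hz0X, 1, le_rfl, by omega, ?_, ?_⟩
      · intro C hC hCc
        obtain ⟨t, rfl⟩ := Finset.card_eq_one.mp hCc
        have ht := hC (Finset.mem_singleton_self t)
        exact hsing1 t (Finset.mem_of_mem_erase ht) (Finset.mem_erase.mp ht).1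
      · intro C hC hCc
        have hCe : C = X.erase z0 := by
          apply Finset.eq_of_subset_of_card_le hC
          rw [Finset.card_erase_of_mem hz0X, hCc]
        rw [hCe]
        exact hD1 z0 hz0X hz01
    by_cases hD2 : ∀ u ∈ X, ({u} : Finset α) ∉ F2 → X.erase u ∈ F1
    · right
      obtain ⟨w0, hw0X, hw02⟩ := exists_not_single h22 hX2 hXne
      have hsing2 : ∀ t ∈ X, t ≠ w0 → ({t} : Finset α) ∈ F2 := by
        intro t htX htz
        by_contra hc
        exact hX1 (two_bigs h21 htX hw0X htz (hD2 t htX hc) (hD2 w0 hw0X hw02))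
      refine ⟨w0, hw0X, X.card - 1, by omega, le_rfl, ?_, ?_⟩
      · intro C hC hCc
        have hCe : C = X.erase w0 := by
          apply Finset.eq_of_subset_of_card_le hC
          rw [Finset.card_erase_of_mem hw0X, hCc]
        rw [hCe]
        exact hD2 w0 hw0X hw02
      · intro C hC hCc
        have hCc1 : C.card = 1 := by rw [hCc]; omega
        obtain ⟨t, rfl⟩ := Finset.card_eq_one.mp hCc1
        have ht := hC (Finset.mem_singleton_self t)
        exact hsing2 t (Finset.mem_of_mem_erase ht) (Finset.mem_erase.mp ht).1
    push_neg at hD1 hD2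
    obtain ⟨z, hzX, hz1, hz2'⟩ := hD1
    obtain ⟨w, hwX, hw2, hw1'⟩ := hD2
    obtain ⟨a1, ha1Xz, hbig1⟩ := big_of_dich h11 h21 hzX (mkdich z hzX hz1 hz2')
    have ha1X : a1 ∈ X := Finset.mem_of_mem_erase ha1Xz
    obtain ⟨a2, ha2Xw, hbig2⟩ := big_of_dich h12 h22 hwX (mkdich2 w hwX hw2 hw1')
    have ha2X : a2 ∈ X := Finset.mem_of_mem_erase ha2Xw
    have huniq1 : ∀ b ∈ X, X.erase b ∈ F1 → b = a1 := by
      intro b hbX hb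
      by_contra hne
      exact hX1 (two_bigs h21 hbX ha1X hne hb hbig1)
    have huniq2 : ∀ b ∈ X, X.erase b ∈ F2 → b = a2 := by
      intro b hbX hb
      by_contra hne
      exact hX2 (two_bigs h22 hbX ha2X hne hb hbig2)
    by_cases haa : a1 = a2
    · -- same pivot
      rw [← haa] at hbig2 huniq2
      have key1 : ∀ u ∈ X, ({u} : Finset α) ∉ F1 → u ≠ a1 →
          BStruct X F1 F2 ∨ LiftA1 X F1 F2 a1 u := by
        intro u huX hu1 hua
        have hu2' : X.erase u ∉ F2 := fun hc => hua (huniq2 u huX hc)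
        exact key_of_dich h11 h21 h12 h22 ha1X huX hua hbig2 huniq1
          (mkdich u huX hu1 hu2')
      have key2 : ∀ u ∈ X, ({u} : Finset α) ∉ F2 → u ≠ a1 →
          BStruct X F1 F2 ∨ LiftA1 X F2 F1 a1 u := by
        intro u huX hu2 hua
        have hu1' : X.erase u ∉ F1 := fun hc => hua (huniq1 u huX hc)
        rcases key_of_dich h12 h22 h11 h21 ha1X huX hua hbig1 huniq2
            (mkdich2 u huX hu2 hu1') with hB | hL
        · exact Or.inl hB.swap
        · exact Or.inr hL
      by_cases hNT1 : ∀ u ∈ X, u ≠ a1 → ({u} : Finset α) ∈ F1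
      · right
        refine ⟨a1, ha1X, 1, le_rfl, by omega, ?_, ?_⟩
        · intro C hC hCc
          obtain ⟨t, rfl⟩ := Finset.card_eq_one.mp hCc
          have ht := hC (Finset.mem_singleton_self t)
          exact hNT1 t (Finset.mem_of_mem_erase ht) (Finset.mem_erase.mp ht).1
        · intro C hC hCc
          have hCe : C = X.erase a1 := by
            apply Finset.eq_of_subset_of_card_le hC
            rw [Finset.card_erase_of_mem ha1X, hCc]
          rw [hCe]; exact hbig2
      by_cases hNT2 : ∀ u ∈ X, u ≠ a1 → ({u} : Finset α) ∈ F2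
      · right
        refine ⟨a1, ha1X, X.card - 1, by omega, le_rfl, ?_, ?_⟩
        · intro C hC hCc
          have hCe : C = X.erase a1 := by
            apply Finset.eq_of_subset_of_card_le hC
            rw [Finset.card_erase_of_mem ha1X, hCc]
          rw [hCe]; exact hbig1
        · intro C hC hCc
          have hCc1 : C.card = 1 := by rw [hCc]; omega
          obtain ⟨t, rfl⟩ := Finset.card_eq_one.mp hCc1
          have ht := hC (Finset.mem_singleton_self t)
          exact hNT2 t (Finset.mem_of_mem_erase ht) (Finset.mem_erase.mp ht).1
      push_neg at hNT1 hNT2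
      obtain ⟨x, hxX, hxa, hx1⟩ := hNT1
      obtain ⟨y, hyX, hya, hy2⟩ := hNT2
      right
      exact case66 h11 h21 h12 h22 hX1 hX2 ha1X hxX hyX hxa hya hbig1 hbig2
        hx1 hy2 key1 key2
    · -- distinct pivots
      left
      have ha1s : ({a1} : Finset α) ∈ F1 := by
        by_contra hc
        have h2' : X.erase a1 ∉ F2 := fun hcc => haa (huniq2 a1 ha1X hcc)
        obtain ⟨b, hbXe, hbbig⟩ := big_of_dich h11 h21 ha1X (mkdich a1 ha1X hc h2')
        exact absurd (huniq1 b (Finset.mem_of_mem_erase hbXe) hbbig)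
          (Finset.mem_erase.mp hbXe).1
      have ha2s : ({a2} : Finset α) ∈ F2 := by
        by_contra hc
        have h1' : X.erase a2 ∉ F1 := fun hcc => haa (huniq1 a2 ha2X hcc).symm
        obtain ⟨b, hbXe, hbbig⟩ := big_of_dich h12 h22 ha2X (mkdich2 a2 ha2X hc h1')
        exact absurd (huniq2 b (Finset.mem_of_mem_erase hbXe) hbbig)
          (Finset.mem_erase.mp hbXe).1
      have hcol1 : ∀ u ∈ X, ({u} : Finset α) ∉ F1 → u ≠ a2 →
          (X.erase u).erase a1 ∈ F2 := by
        intro u huX hu1 hua2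
        have hu2' : X.erase u ∉ F2 := fun hc => hua2 (huniq2 u huX hc)
        have hua1 : u ≠ a1 := fun h => hu1 (h ▸ ha1s)
        exact colTop_of_dich h11 h21 h22 ha1X huX hua1 ha1s hu1 huniq1
          (mkdich u huX hu1 hu2')
      have hcol2 : ∀ u ∈ X, ({u} : Finset α) ∉ F2 → u ≠ a1 →
          (X.erase u).erase a2 ∈ F1 := by
        intro u huX hu2 hua1
        have hu1' : X.erase u ∉ F1 := fun hc => hua1 (huniq1 u huX hc)
        have hua2 : u ≠ a2 := fun h => hu2 (h ▸ ha2s)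
        exact colTop_of_dich h12 h22 h21 ha2X huX hua2 ha2s hu2 huniq2
          (mkdich2 u huX hu2 hu1')
      have vee_blow : ∀ (F : Set (Finset α)), PropS2 F → ∀ u ∈ X, ∀ u' ∈ X, ∀ b,
          u ≠ u' → u ≠ b → u' ≠ b →
          (X.erase u).erase b ∈ F → (X.erase u').erase b ∈ F → X.erase b ∈ F := by
        intro F hF u huX u' hu'X b hne hub hu'b hV hV'
        rw [Finset.erase_right_comm] at hV hV'
        exact two_bigs hF (Finset.mem_erase.mpr ⟨hub, huX⟩)
          (Finset.mem_erase.mpr ⟨hu'b, hu'X⟩) hne hV hV'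
      have hone1 : ∀ u ∈ X, ∀ u' ∈ X, ({u} : Finset α) ∉ F1 →
          ({u'} : Finset α) ∉ F1 → u ≠ a2 → u' ≠ a2 → u = u' := by
        intro u huX u' hu'X hu1 hu'1 hua hu'a
        by_contra hne
        have hua1 : u ≠ a1 := fun h => hu1 (h ▸ ha1s)
        have hu'a1 : u' ≠ a1 := fun h => hu'1 (h ▸ ha1s)
        have := vee_blow F2 h22 u huX u' hu'X a1 hne hua1 hu'a1
          (hcol1 u huX hu1 hua) (hcol1 u' hu'X hu'1 hu'a)
        exact haa (huniq2 a1 ha1X this)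
      have hone2 : ∀ u ∈ X, ∀ u' ∈ X, ({u} : Finset α) ∉ F2 →
          ({u'} : Finset α) ∉ F2 → u ≠ a1 → u' ≠ a1 → u = u' := by
        intro u huX u' hu'X hu2 hu'2 hua hu'a
        by_contra hne
        have hua2 : u ≠ a2 := fun h => hu2 (h ▸ ha2s)
        have hu'a2 : u' ≠ a2 := fun h => hu'2 (h ▸ ha2s)
        have := vee_blow F1 h21 u huX u' hu'X a2 hne hua2 hu'a2
          (hcol2 u huX hu2 hua) (hcol2 u' hu'X hu'2 hu'a)
        exact haa (huniq1 a2 ha2X this).symm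
      have hc1ex : ∃ c1 ∈ X, ({c1} : Finset α) ∉ F1 ∧ c1 ≠ a2 := by
        by_contra hc
        push_neg at hc
        have : X.erase a2 ∈ F1 := by
          apply memTop h21 ⟨a1, Finset.mem_erase.mpr ⟨haa, ha1X⟩⟩
          intro t htXe
          by_contra ht1
          exact (Finset.mem_erase.mp htXe).1
            (hc t (Finset.mem_of_mem_erase htXe) ht1)
        exact haa (huniq1 a2 ha2X this).symm
      have hc2ex : ∃ c2 ∈ X, ({c2} : Finset α) ∉ F2 ∧ c2 ≠ a1 := by
        by_contra hc
        push_neg at hc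
        have : X.erase a1 ∈ F2 := by
          apply memTop h22 ⟨a2, Finset.mem_erase.mpr ⟨Ne.symm haa, ha2X⟩⟩
          intro t htXe
          by_contra ht2
          exact (Finset.mem_erase.mp htXe).1
            (hc t (Finset.mem_of_mem_erase htXe) ht2)
        exact haa (huniq2 a1 ha1X this)
      obtain ⟨c1, hc1X, hc11, hc1a2⟩ := hc1ex
      obtain ⟨c2, hc2X, hc22, hc2a1⟩ := hc2ex
      have hc1a1 : c1 ≠ a1 := fun h => hc11 (h ▸ ha1s)
      have hc2a2 : c2 ≠ a2 := fun h => hc22 (h ▸ ha2s)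
      have hcc : c1 = c2 := by
        by_contra hne
        have hW : (X.erase c2).erase a1 ∈ F2 := by
          apply memTop h22
          · refine ⟨a2, Finset.mem_erase.mpr ⟨Ne.symm haa,
              Finset.mem_erase.mpr ⟨Ne.symm hc2a2, ha2X⟩⟩⟩
          · intro t htm
            have hta1 : t ≠ a1 := (Finset.mem_erase.mp htm).1
            have htc2 : t ≠ c2 := (Finset.mem_erase.mp (Finset.mem_of_mem_erase htm)).1
            have htX : t ∈ X := Finset.mem_of_mem_erase (Finset.mem_of_mem_erase htm)
            by_contra ht2
            exact htc2 (hone2 t htX c2 hc2X ht2 hc22 hta1 hc2a1)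
        have := vee_blow F2 h22 c1 hc1X c2 hc2X a1 hne hc1a1 hc2a1
          (hcol1 c1 hc1X hc11 hc1a2) hW
        exact haa (huniq2 a1 ha1X this)
      refine ⟨a1, ha1X, a2, ha2X, c1, hc1X, haa, hc1a1, hc1a2, hbig1, hbig2, ?_, ?_⟩
      · intro t htX hta2 htc
        by_contra hc
        exact htc (hone1 t htX c1 hc1X hc hc11 hta2 hc1a2)
      · intro t htX hta1 htc
        by_contra hc
        rw [hcc] at htc
        exact htc (hone2 t htX c2 hc2X hc hc22 hta1 hc2a1)


/-- Necessity in Theorem 4.1: an order-consistent `S`-pair admits the witness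
configuration. -/
theorem stmt9 (S : Finset α) (𝒮₁ 𝒮₂ : Set (Finset α)) (hn : 3 ≤ S.card)
    (h : IsSPair S 𝒮₁ 𝒮₂) (hoc : OrderConsistent S 𝒮₁ 𝒮₂) :
    SPairWitness S 𝒮₁ 𝒮₂ := by
  obtain ⟨hsub1, hsub2, h11, h12, h21, h22, hns1, hns2, hS1, hS2, hS4⟩ := h
  rcases lemD S.card S 𝒮₁ 𝒮₂ rfl (by omega) h11 h21 h12 h22 hS1 hS2 hoc with hA | hB
  · obtain ⟨a1, ha1S, a2, ha2S, c, hcS, haa, hca1, hca2, hbig1, hbig2, hs1, hs2⟩ := hA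
    have hca2' : c ∈ S.erase a2 := Finset.mem_erase.mpr ⟨hca2, hcS⟩
    have hca1' : c ∈ S.erase a1 := Finset.mem_erase.mpr ⟨hca1, hcS⟩
    have ha2a1 : a2 ∈ S.erase a1 := Finset.mem_erase.mpr ⟨Ne.symm haa, ha2S⟩
    have hcint : c ∈ (S.erase a1).erase a2 := Finset.mem_erase.mpr ⟨hca2, hca1'⟩
    refine ⟨S.erase a1, hbig1, S.erase a2, hbig2,
      (S.erase a2).erase c, (S.erase a1).erase c,
      Finset.card_erase_of_mem ha1S, Finset.card_erase_of_mem ha2S, ?_, ?_, ?_,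
      ?_, ?_, ?_, ?_, ?_, ?_, ?_, ?_⟩
    · intro hEq
      have : a2 ∈ S.erase a2 := hEq ▸ ha2a1
      exact (Finset.notMem_erase a2 S) this
    · exact (Finset.erase_subset _ _).trans (Finset.erase_subset _ _)
    · exact (Finset.erase_subset _ _).trans (Finset.erase_subset _ _)
    · rw [Finset.card_erase_of_mem hca2', Finset.card_erase_of_mem ha2S]; omega
    · rw [Finset.card_erase_of_mem hca1', Finset.card_erase_of_mem ha1S]; omega
    · ext t
      simp only [Finset.mem_inter, Finset.mem_erase]
      tauto
    · ext t
      simp only [Finset.mem_inter, Finset.mem_erase]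
      tauto
    · intro t ht
      simp only [Finset.mem_inter, Finset.mem_erase] at ht ⊢
      tauto
    · have hIeq : (S.erase a2).erase c ∩ (S.erase a1).erase c
          = ((S.erase a1).erase a2).erase c := by
        ext t
        simp only [Finset.mem_inter, Finset.mem_erase]
        tauto
      rw [hIeq, Finset.card_erase_of_mem hcint, Finset.card_erase_of_mem ha2a1,
        Finset.card_erase_of_mem ha1S]
      omega
    · intro t ht
      have htc : t ≠ c := (Finset.mem_erase.mp ht).1
      have hta2 : t ≠ a2 := (Finset.mem_erase.mp (Finset.mem_of_mem_erase ht)).1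
      have htS : t ∈ S := Finset.mem_of_mem_erase (Finset.mem_of_mem_erase ht)
      exact hs1 t htS hta2 htc
    · intro t ht
      have htc : t ≠ c := (Finset.mem_erase.mp ht).1
      have hta1 : t ≠ a1 := (Finset.mem_erase.mp (Finset.mem_of_mem_erase ht)).1
      have htS : t ∈ S := Finset.mem_of_mem_erase (Finset.mem_of_mem_erase ht)
      exact hs2 t htS hta1 htc
  · exfalso
    obtain ⟨a, haS, k, hk1, hk2, hf1, hf2⟩ := hB
    exact hS4 k hk1 hk2 a haS ⟨hf1, hf2⟩
end

section
/- Let (S1, S2) be an S-pair on S with |S| = n. Then at most one element x ∈ S has the property that there exist a subset D of S - x with |D| = n - 2 and positive integers i, j with i + j = n - 1 such that every i-subset of D lies in S1^x := {A - x : A ∈ S1, x ∈ A} and every j-subset of D lies in S2^x := {A ∈ S2 : x ∉ A}. -/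
variable {α : Type*} [DecidableEq α]

/-- The property (a4) of an element `x` of `S`: there are `D ⊆ S - x` with
`|D| = |S| - 2` and `i + j = |S| - 1` with all `i`-subsets of `D` in
`𝒮₁ˣ = {A - x : A ∈ 𝒮₁, x ∈ A}` and all `j`-subsets of `D` in
`𝒮₂ˣ = {A ∈ 𝒮₂ : x ∉ A}`. -/
def PropA4 (S : Finset α) (𝒮₁ 𝒮₂ : Set (Finset α)) (x : α) : Prop :=
  ∃ D ⊆ S.erase x, D.card = S.card - 2 ∧
    ∃ i j : ℕ, 0 < i ∧ 0 < j ∧ i + j = S.card - 1 ∧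
      (∀ C ⊆ D, C.card = i → ∃ A ∈ 𝒮₁, x ∈ A ∧ C = A.erase x) ∧
      (∀ C ⊆ D, C.card = j → C ∈ 𝒮₂ ∧ x ∉ C)

lemma propS2_insert (𝒮 : Set (Finset α)) (x : α) (h : PropS2 𝒮) :
    PropS2 {C : Finset α | x ∉ C ∧ insert x C ∈ 𝒮} := by
  rintro A ⟨hxA, hA⟩ B ⟨hxB, hB⟩ hcard hint
  by_cases hAB : A = B
  · subst hAB; exact ⟨by simpa using hxA, by simpa using hA⟩
  · have hA1 : 1 ≤ A.card := by
      rcases Nat.eq_zero_or_pos A.card with h0 | h1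
      · exfalso
        have hAe : A = ∅ := Finset.card_eq_zero.mp h0
        have hBe : B = ∅ := Finset.card_eq_zero.mp (by omega)
        exact hAB (hAe.trans hBe.symm)
      · exact h1
    have hxAB : x ∉ A ∩ B := by simp [Finset.mem_inter, hxA]
    have hc1 : (insert x A).card = (insert x B).card := by
      rw [Finset.card_insert_of_notMem hxA, Finset.card_insert_of_notMem hxB, hcard]
    have hc2 : (insert x A ∩ insert x B).card = (insert x A).card - 1 := by
      rw [← Finset.insert_inter_distrib, Finset.card_insert_of_notMem hxAB,
        Finset.card_insert_of_notMem hxA]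
      omega
    have hU := h _ hA _ hB hc1 hc2
    have hEq : insert x A ∪ insert x B = insert x (A ∪ B) := by
      ext a; simp only [Finset.mem_union, Finset.mem_insert]; tauto
    refine ⟨by simp [Finset.mem_union, hxA, hxB], ?_⟩
    rwa [hEq] at hU

lemma upLem {𝒮 : Set (Finset α)} (h2 : PropS2 𝒮) (D : Finset α) (m : ℕ) (hm : 1 ≤ m)
    (hbase : ∀ C ⊆ D, C.card = m → C ∈ 𝒮) :
    ∀ E ⊆ D, m ≤ E.card → E ∈ 𝒮 := by
  have key : ∀ s : ℕ, ∀ E ⊆ D, E.card = m + s → E ∈ 𝒮 := by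
    intro s
    induction s with
    | zero => intro E hE hc; exact hbase E hE (by omega)
    | succ s ih =>
      intro E hED hc
      obtain ⟨u, hu, v, hv, huv⟩ := Finset.one_lt_card.mp (show 1 < E.card by omega)
      have hAD : E.erase u ⊆ D := (Finset.erase_subset _ _).trans hED
      have hBD : E.erase v ⊆ D := (Finset.erase_subset _ _).trans hED
      have hAc : (E.erase u).card = m + s := by rw [Finset.card_erase_of_mem hu]; omega
      have hBc : (E.erase v).card = m + s := by rw [Finset.card_erase_of_mem hv]; omega
      have hA := ih _ hAD hAc
      have hB := ih _ hBD hBc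
      have hint : (E.erase u ∩ E.erase v) = (E.erase u).erase v := by
        ext a; simp only [Finset.mem_inter, Finset.mem_erase]; tauto
      have hic : (E.erase u ∩ E.erase v).card = (E.erase u).card - 1 := by
        rw [hint, Finset.card_erase_of_mem (Finset.mem_erase.mpr ⟨huv.symm, hv⟩)]
      have hun : E.erase u ∪ E.erase v = E := by
        ext a
        simp only [Finset.mem_union, Finset.mem_erase]
        constructor
        · rintro (⟨_, h⟩ | ⟨_, h⟩) <;> exact h
        · intro ha
          by_cases hau : a = u
          · exact Or.inr ⟨by rw [hau]; exact huv, ha⟩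
          · exact Or.inl ⟨hau, ha⟩
      have := h2 _ hA _ hB (hAc.trans hBc.symm) hic
      rwa [hun] at this
  intro E hE hc
  exact key (E.card - m) E hE (by omega)

lemma downLem {𝒮 : Set (Finset α)} (h1 : PropS1 𝒮) (T : Finset α) (x : α) (hx : x ∈ T)
    (m : ℕ) (hm : 1 ≤ m) (hT : T ∈ 𝒮)
    (hB : ∀ A ⊆ T, x ∈ A → m + 1 ≤ A.card → ∃ B ∈ 𝒮, B ⊂ A ∧ A.card = B.card + 1) :
    ∀ C ⊆ T, m ≤ C.card → C ∈ 𝒮 := by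
  have key : ∀ t : ℕ, ∀ C ⊆ T, m ≤ C.card → C.card + t = T.card → C ∈ 𝒮 := by
    intro t
    induction t with
    | zero =>
      intro C hC _ hc
      have : C = T := Finset.eq_of_subset_of_card_le hC (by omega)
      exact this ▸ hT
    | succ t ih =>
      intro C hC hm' hc
      obtain ⟨A, hAT, hCA, hxA, hAc⟩ : ∃ A, A ⊆ T ∧ C ⊆ A ∧ x ∈ A ∧ A.card = C.card + 1 := by
        by_cases hxC : x ∈ C
        · obtain ⟨w, hwT, hwC⟩ := Finset.exists_of_ssubset
            (show C ⊂ T from Finset.ssubset_iff_subset_ne.mpr ⟨hC, fun hEq => by rw [hEq] at hc; omega⟩)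
          exact ⟨insert w C, Finset.insert_subset hwT hC, Finset.subset_insert _ _,
            Finset.mem_insert_of_mem hxC, Finset.card_insert_of_notMem hwC⟩
        · exact ⟨insert x C, Finset.insert_subset hx hC, Finset.subset_insert _ _,
            Finset.mem_insert_self _ _, Finset.card_insert_of_notMem hxC⟩
      have hA𝒮 := ih A hAT (by omega) (by omega)
      obtain ⟨B, hB𝒮, hBA, hABc⟩ := hB A hAT hxA (by omega)
      exact h1 A hA𝒮 B hB𝒮 hABc hBA C hCA (by omega)
  intro C hC hc
  exact key (T.card - C.card) C hC hc (by have := Finset.card_le_card hC; omega)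

/-- Claim: in an `S`-pair, at most one element of `S` satisfies property (a4). -/
theorem stmt11 (S : Finset α) (𝒮₁ 𝒮₂ : Set (Finset α)) (h : IsSPair S 𝒮₁ 𝒮₂) :
    ∀ x ∈ S, ∀ y ∈ S, PropA4 S 𝒮₁ 𝒮₂ x → PropA4 S 𝒮₁ 𝒮₂ y → x = y := by
  obtain ⟨hS1sub, hS2sub, hP11, hP12, hP21, hP22, -, -, hSn1, hSn2, hS4⟩ := h
  intro x hx y hy hax hay
  by_contra hxy
  obtain ⟨D₁, hD₁, hD₁c, i₁, j₁, hi₁, hj₁, hij₁, hA1, hA2⟩ := hax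
  obtain ⟨D₂, hD₂, hD₂c, i₂, j₂, hi₂, hj₂, hij₂, hB1, hB2⟩ := hay
  have hn3 : 3 ≤ S.card := by omega
  have hxD₁ : x ∉ D₁ := fun hmem => (Finset.mem_erase.mp (hD₁ hmem)).1 rfl
  have hyD₂ : y ∉ D₂ := fun hmem => (Finset.mem_erase.mp (hD₂ hmem)).1 rfl
  have hD₁S : D₁ ⊆ S := hD₁.trans (Finset.erase_subset _ _)
  have hD₂S : D₂ ⊆ S := hD₂.trans (Finset.erase_subset _ _)
  -- upward closure in 𝒮₁ (sets containing x, resp. y)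
  have hup1 : ∀ E ⊆ D₁, i₁ ≤ E.card → insert x E ∈ 𝒮₁ := by
    have hb : ∀ C ⊆ D₁, C.card = i₁ → C ∈ {C : Finset α | x ∉ C ∧ insert x C ∈ 𝒮₁} := by
      intro C hC hc
      obtain ⟨A, hA𝒮, hxA, hCA⟩ := hA1 C hC hc
      refine ⟨fun hxC => (Finset.mem_erase.mp (hD₁ (hC hxC))).1 rfl, ?_⟩
      rw [hCA, Finset.insert_erase hxA]; exact hA𝒮
    intro E hE hc
    exact (upLem (propS2_insert 𝒮₁ x hP21) D₁ i₁ hi₁ hb E hE hc).2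
  have hup1y : ∀ E ⊆ D₂, i₂ ≤ E.card → insert y E ∈ 𝒮₁ := by
    have hb : ∀ C ⊆ D₂, C.card = i₂ → C ∈ {C : Finset α | y ∉ C ∧ insert y C ∈ 𝒮₁} := by
      intro C hC hc
      obtain ⟨A, hA𝒮, hyA, hCA⟩ := hB1 C hC hc
      refine ⟨fun hyC => (Finset.mem_erase.mp (hD₂ (hC hyC))).1 rfl, ?_⟩
      rw [hCA, Finset.insert_erase hyA]; exact hA𝒮
    intro E hE hc
    exact (upLem (propS2_insert 𝒮₁ y hP21) D₂ i₂ hi₂ hb E hE hc).2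
  -- upward closure in 𝒮₂
  have hup2 : ∀ E ⊆ D₁, j₁ ≤ E.card → E ∈ 𝒮₂ :=
    upLem hP22 D₁ j₁ hj₁ (fun C hC hc => (hA2 C hC hc).1)
  have hup2y : ∀ E ⊆ D₂, j₂ ≤ E.card → E ∈ 𝒮₂ :=
    upLem hP22 D₂ j₂ hj₂ (fun C hC hc => (hB2 C hC hc).1)
  have hT₁ : insert x D₁ ∈ 𝒮₁ := hup1 D₁ subset_rfl (by omega)
  have hT₂ : insert y D₂ ∈ 𝒮₁ := hup1y D₂ subset_rfl (by omega)
  have hT₁c : (insert x D₁).card = S.card - 1 := by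
    rw [Finset.card_insert_of_notMem hxD₁]; omega
  have hT₂c : (insert y D₂).card = S.card - 1 := by
    rw [Finset.card_insert_of_notMem hyD₂]; omega
  have hT₁S : insert x D₁ ⊆ S := Finset.insert_subset hx hD₁S
  have hT₂S : insert y D₂ ⊆ S := Finset.insert_subset hy hD₂S
  -- the two (n-1)-sets in 𝒮₁ coincide
  have hTT : insert x D₁ = insert y D₂ := by
    by_contra hne
    have hcup : ((insert x D₁) ∪ (insert y D₂)).card ≤ S.card :=
      Finset.card_le_card (Finset.union_subset hT₁S hT₂S)
    have hsum := Finset.card_union_add_card_inter (insert x D₁) (insert y D₂)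
    have hne2 : (insert x D₁ ∩ insert y D₂) ≠ insert x D₁ := by
      intro hEq
      have hsub : insert x D₁ ⊆ insert y D₂ := by
        rw [← hEq]; exact Finset.inter_subset_right
      exact hne (Finset.eq_of_subset_of_card_le hsub (by omega))
    have hlt : (insert x D₁ ∩ insert y D₂).card < (insert x D₁).card :=
      Finset.card_lt_card (Finset.ssubset_iff_subset_ne.mpr ⟨Finset.inter_subset_left, hne2⟩)
    have hint : (insert x D₁ ∩ insert y D₂).card = (insert x D₁).card - 1 := by omega
    have hU := hP21 _ hT₁ _ hT₂ (by omega) hint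
    have hUS : (insert x D₁) ∪ (insert y D₂) = S :=
      Finset.eq_of_subset_of_card_le (Finset.union_subset hT₁S hT₂S) (by omega)
    exact hSn1 (hUS ▸ hU)
  set T := insert x D₁ with hTdef
  have hxT : x ∈ T := Finset.mem_insert_self _ _
  have hyT : y ∈ T := by rw [hTT]; exact Finset.mem_insert_self _ _
  have hD₁T : D₁ = T.erase x := by
    apply Finset.eq_of_subset_of_card_le
    · exact Finset.subset_erase.mpr ⟨Finset.subset_insert _ _, hxD₁⟩
    · rw [Finset.card_erase_of_mem hxT]; omega
  have hD₂T : D₂ = T.erase y := by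
    apply Finset.eq_of_subset_of_card_le
    · refine Finset.subset_erase.mpr ⟨?_, hyD₂⟩
      rw [hTT]; exact Finset.subset_insert _ _
    · rw [Finset.card_erase_of_mem hyT]; omega
  have hyx : y ≠ x := fun hEq => hxy hEq.symm
  -- T ∈ 𝒮₂
  have hTS2 : T ∈ 𝒮₂ := by
    have h1 : D₁ ∈ 𝒮₂ := hup2 D₁ subset_rfl (by omega)
    have h2 : D₂ ∈ 𝒮₂ := hup2y D₂ subset_rfl (by omega)
    have hintEq : D₁ ∩ D₂ = (T.erase x).erase y := by
      rw [hD₁T, hD₂T]; ext a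
      simp only [Finset.mem_inter, Finset.mem_erase]
      tauto
    have hint : (D₁ ∩ D₂).card = D₁.card - 1 := by
      rw [hintEq, Finset.card_erase_of_mem (Finset.mem_erase.mpr ⟨hyx, hyT⟩),
        Finset.card_erase_of_mem hxT]
      omega
    have hU := hP22 _ h1 _ h2 (by omega) hint
    have hunEq : D₁ ∪ D₂ = T := by
      rw [hD₁T, hD₂T]; ext a
      simp only [Finset.mem_union, Finset.mem_erase]
      constructor
      · rintro (⟨_, h⟩ | ⟨_, h⟩) <;> exact h
      · intro ha
        by_cases hax' : a = x
        · exact Or.inr ⟨by rw [hax']; exact fun hEq => hxy hEq, ha⟩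
        · exact Or.inl ⟨hax', ha⟩
    rwa [hunEq] at hU
  -- known 𝒮₁ sets: subsets of T containing x of size ≥ i₁+1
  have kn1 : ∀ B ⊆ T, x ∈ B → i₁ + 1 ≤ B.card → B ∈ 𝒮₁ := by
    intro B hBT hxB hc
    have hBe : B.erase x ⊆ D₁ := by
      rw [hD₁T]; exact Finset.erase_subset_erase _ hBT
    have := hup1 (B.erase x) hBe (by rw [Finset.card_erase_of_mem hxB]; omega)
    rwa [Finset.insert_erase hxB] at this
  -- downward closure in 𝒮₁
  have con1 : ∀ C ⊆ T, i₁ + 1 ≤ C.card → C ∈ 𝒮₁ := by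
    refine downLem hP11 T x hxT (i₁ + 1) (by omega) hT₁ ?_
    intro A hAT hxA hc
    obtain ⟨u, hu, v, hv, huv⟩ := Finset.one_lt_card.mp (show 1 < A.card by omega)
    obtain ⟨w, hw, hwx⟩ : ∃ w ∈ A, w ≠ x := by
      by_cases hux : u = x
      · exact ⟨v, hv, fun hEq => huv (by rw [hux, hEq])⟩
      · exact ⟨u, hu, hux⟩
    refine ⟨A.erase w, ?_, Finset.erase_ssubset hw, by rw [Finset.card_erase_of_mem hw]; omega⟩
    exact kn1 _ ((Finset.erase_subset _ _).trans hAT)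
      (Finset.mem_erase.mpr ⟨fun hEq => hwx hEq.symm, hxA⟩)
      (by rw [Finset.card_erase_of_mem hw]; omega)
  -- downward closure in 𝒮₂
  have con2 : ∀ C ⊆ T, j₁ ≤ C.card → C ∈ 𝒮₂ := by
    refine downLem hP12 T x hxT j₁ hj₁ hTS2 ?_
    intro A hAT hxA hc
    refine ⟨A.erase x, ?_, Finset.erase_ssubset hxA,
      by rw [Finset.card_erase_of_mem hxA]; omega⟩
    refine hup2 _ ?_ (by rw [Finset.card_erase_of_mem hxA]; omega)
    rw [hD₁T]; exact Finset.erase_subset_erase _ hAT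
  -- find z with T = S.erase z and contradict (S4)
  obtain ⟨z, hzS, hzT⟩ := Finset.exists_of_ssubset
    (show T ⊂ S from Finset.ssubset_iff_subset_ne.mpr ⟨hT₁S, fun hEq => by have := congrArg Finset.card hEq; omega⟩)
  have hTz : T = S.erase z :=
    Finset.eq_of_subset_of_card_le (Finset.subset_erase.mpr ⟨hT₁S, hzT⟩)
      (by rw [Finset.card_erase_of_mem hzS]; omega)
  refine hS4 (i₁ + 1) (by omega) (by omega) z hzS ⟨?_, ?_⟩
  · intro C hC hc
    exact con1 C (by rw [hTz]; exact hC) (by omega)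
  · intro C hC hc
    exact con2 C (by rw [hTz]; exact hC) (by omega)
end

section
/- Let N be a matroid of rank r whose ground set is the union of two bases A and B. If there exist orderings a1...ar of A and b1...br of B such that for each i ∈ [r-1], both {a1,...,ai, b_{i+1},...,br} and {a_{i+1},...,ar, b1,...,bi} are bases, then N is cyclically orderable. -/
open Set

variable {α : Type*}

/-! The cyclic order is `a₁ … a_r b₁ … b_r`. Its window starting at `a_{j+1}` is
`{a_{j+1}, …, a_r, b₁, …, b_j}` and its window starting at `b_{j+1}` is
`{b_{j+1}, …, b_r, a₁, …, a_j}`: for `j = 0` these are `A` and `B`, and for `0 < j < r` they are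
exactly the two bases of the hypothesis. -/

namespace List

lemma setOf_mem_drop_ofFn {r : ℕ} (f : Fin r → α) (j : ℕ) :
    {x | x ∈ (ofFn f).drop j} = f '' {k | j ≤ (k : ℕ)} := by
  ext x
  simp only [mem_ofPred_eq, mem_drop_iff_getElem, List.getElem_ofFn, length_ofFn, mem_image]
  constructor
  · rintro ⟨i, hi, rfl⟩
    exact ⟨⟨j + i, by omega⟩, by simp, rfl⟩
  · rintro ⟨k, hk, rfl⟩
    exact ⟨k - j, by omega, congrArg f (Fin.ext (by simp; omega))⟩

lemma setOf_mem_take_ofFn {r : ℕ} (f : Fin r → α) (j : ℕ) :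
    {x | x ∈ (ofFn f).take j} = f '' {k | (k : ℕ) < j} := by
  ext x
  simp only [mem_ofPred_eq, mem_take_iff_getElem, List.getElem_ofFn, length_ofFn, mem_image]
  constructor
  · rintro ⟨i, hi, rfl⟩
    exact ⟨⟨i, by omega⟩, by simp; omega, rfl⟩
  · rintro ⟨k, hk, rfl⟩
    exact ⟨k, by omega, rfl⟩

lemma setOf_mem_take_rotate_ofFn_append {r j : ℕ} (f g : Fin r → α) (hj : j ≤ r) :
    {x | x ∈ ((ofFn f ++ ofFn g).rotate j).take r} =
      f '' {k | j ≤ (k : ℕ)} ∪ g '' {k | (k : ℕ) < j} := by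
  have hlen : ((ofFn f).drop j).length = r - j := by simp
  rw [rotate_eq_drop_append_take (by simp; omega), drop_append_of_le_length (by simpa),
    take_append_of_le_length (by simp), take_append, take_of_length_le (by omega), hlen,
    show r - (r - j) = j by omega]
  simp only [mem_append, ofPred_or, setOf_mem_drop_ofFn, setOf_mem_take_ofFn]

lemma exists_setOf_mem_take_rotate_ofFn_append {r : ℕ} (f g : Fin r → α) (i : ℕ) :
    ∃ j ≤ r, {x | x ∈ ((ofFn f ++ ofFn g).rotate i).take r} =
        f '' {k | j ≤ (k : ℕ)} ∪ g '' {k | (k : ℕ) < j} ∨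
      {x | x ∈ ((ofFn f ++ ofFn g).rotate i).take r} =
        g '' {k | j ≤ (k : ℕ)} ∪ f '' {k | (k : ℕ) < j} := by
  rcases Nat.eq_zero_or_pos r with rfl | hr
  · exact ⟨0, le_rfl, Or.inl (by simp [eq_empty_of_isEmpty])⟩
  have hlen : (ofFn f ++ ofFn g).length = r + r := by simp
  obtain ⟨n, hn⟩ : ∃ n, i % (r + r) = n := ⟨_, rfl⟩
  have hlt : n < r + r := hn ▸ Nat.mod_lt _ (by omega)
  rw [← rotate_mod, hlen, hn]
  rcases le_or_gt n r with hle | hgt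
  · exact ⟨n, hle, Or.inl (setOf_mem_take_rotate_ofFn_append f g hle)⟩
  · have hswap : (ofFn f ++ ofFn g).rotate n = (ofFn g ++ ofFn f).rotate (n - r) := by
      rw [← rotate_append_length_eq (ofFn f), rotate_rotate, length_ofFn]
      congr 1
      omega
    refine ⟨n - r, by omega, Or.inr ?_⟩
    rw [hswap, setOf_mem_take_rotate_ofFn_append g f (by omega)]

end List

lemma Matroid.isBase_image_le_union_image_lt {M : Matroid α} {r : ℕ} {f g : Fin r → α}
    (hf : M.IsBase (range f)) (hg : M.IsBase (range g))
    (hmid : ∀ j : ℕ, 1 ≤ j → j ≤ r - 1 →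
      M.IsBase (f '' {k | j ≤ (k : ℕ)} ∪ g '' {k | (k : ℕ) < j}))
    {j : ℕ} (hj : j ≤ r) : M.IsBase (f '' {k | j ≤ (k : ℕ)} ∪ g '' {k | (k : ℕ) < j}) := by
  rcases Nat.eq_zero_or_pos j with rfl | hpos
  · simpa [image_univ] using hf
  rcases hj.eq_or_lt with rfl | hlt
  · have hempty : {k : Fin j | j ≤ (k : ℕ)} = ∅ :=
      eq_empty_of_forall_notMem fun k => k.is_lt.not_ge
    simpa [hempty, image_univ] using hg
  exact hmid j hpos (by omega)

/-- Gabow's property for a matroid that is the disjoint union of two bases implies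
cyclic orderability. -/
theorem stmt19 (N : Matroid α) (A B : Set α) (hA : N.IsBase A) (hB : N.IsBase B)
    (hE : N.E = A ∪ B) (hdisj : Disjoint A B)
    (a b : Fin N.rank → α) (ha : Function.Injective a) (hb : Function.Injective b)
    (hra : Set.range a = A) (hrb : Set.range b = B)
    (hmix : ∀ i : ℕ, 1 ≤ i → i ≤ N.rank - 1 →
      N.IsBase (a '' {k | (k : ℕ) < i} ∪ b '' {k | i ≤ (k : ℕ)}) ∧
      N.IsBase (a '' {k | i ≤ (k : ℕ)} ∪ b '' {k | (k : ℕ) < i})) :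
    ∃ l : List α, N.IsCyclicOrdering l := by
  subst hra hrb
  refine ⟨List.ofFn a ++ List.ofFn b, ?_, ?_, fun i => ?_⟩
  · refine List.nodup_append.mpr ⟨List.nodup_ofFn.mpr ha, List.nodup_ofFn.mpr hb, ?_⟩
    simp only [List.mem_ofFn]
    exact fun _ hx _ hy => hdisj.ne_of_mem hx hy
  · simp only [hE, List.mem_append, List.mem_ofFn, ofPred_or]
    rfl
  · obtain ⟨j, hj, h | h⟩ := List.exists_setOf_mem_take_rotate_ofFn_append a b i <;> rw [h]
    · exact N.isBase_image_le_union_image_lt hA hB (fun j h₁ h₂ => (hmix j h₁ h₂).2) hj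
    · exact N.isBase_image_le_union_image_lt hB hA
        (fun j h₁ h₂ => union_comm (a '' _) _ ▸ (hmix j h₁ h₂).1) hj
end
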